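/- arXiv:0909.4981 — 12 statements merged into one kernel-verified Lean document; each statement's English description precedes it below -/
import Mathlib

section
/- Let a, b, h, i ≥ 0 and x, y > 0 be fixed real numbers. Then, as k tends to 0 within the positive reals, the quotient (cos(k·a) + cos(k·y)·cos(k·x)·cos(k·b) + cos(k·a)·cos(k·b) − cos(k·y)·cos(k·h) − cos(k·x)·cos(k·i) − cos(k·h)·cos(k·i)) / ((1 + cos(k·b))·sin(k·x)·sin(k·y)) tends to (h² + i² − a² − b²)/(2·x·y). -/
open Real Filter

private lemma qcl_tendsto_sin_div (t : ℝ) :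
    Tendsto (fun k : ℝ => Real.sin (k * t) / k) (nhdsWithin 0 (Set.Ioi 0)) (nhds t) := by
  rcases eq_or_ne t 0 with rfl | ht
  · refine tendsto_const_nhds.congr fun k => ?_
    simp
  · have h1 : Tendsto (fun θ : ℝ => Real.sin θ / θ) (nhdsWithin 0 {(0:ℝ)}ᶜ) (nhds 1) := by
      have hd := Real.hasDerivAt_sin 0
      rw [hasDerivAt_iff_tendsto_slope] at hd
      simpa [slope_fun_def, Real.sin_zero, div_eq_inv_mul] using hd
    have hmap : Tendsto (fun k : ℝ => k * t) (nhdsWithin 0 (Set.Ioi 0))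
        (nhdsWithin 0 {(0:ℝ)}ᶜ) := by
      refine tendsto_inf.2 ⟨?_, ?_⟩
      · have : Continuous fun k : ℝ => k * t := continuous_id.mul continuous_const
        exact (this.tendsto' 0 0 (by simp)).mono_left nhdsWithin_le_nhds
      · rw [tendsto_principal]
        filter_upwards [self_mem_nhdsWithin] with k hk
        exact mul_ne_zero (ne_of_gt hk) ht
    have h2 := (h1.comp hmap).const_mul t
    rw [mul_one] at h2
    refine h2.congr' ?_
    filter_upwards [self_mem_nhdsWithin] with k hk
    have hk' : (k : ℝ) ≠ 0 := ne_of_gt hk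
    simp only [Function.comp]
    field_simp

private lemma qcl_tendsto_one_sub_cos (t : ℝ) :
    Tendsto (fun k : ℝ => (1 - Real.cos (k * t)) / k ^ 2) (nhdsWithin 0 (Set.Ioi 0))
      (nhds (t ^ 2 / 2)) := by
  have h := ((qcl_tendsto_sin_div (t / 2)).mul (qcl_tendsto_sin_div (t / 2))).const_mul 2
  rw [show 2 * (t / 2 * (t / 2)) = t ^ 2 / 2 by ring] at h
  refine h.congr' ?_
  filter_upwards [self_mem_nhdsWithin] with k hk
  have hk' : (k : ℝ) ≠ 0 := ne_of_gt hk
  have hc : Real.cos (k * t) = 1 - 2 * Real.sin (k * (t / 2)) ^ 2 := by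
    have hpy := Real.sin_sq_add_cos_sq (k * (t / 2))
    have h2 : Real.cos (k * t) = 2 * Real.cos (k * (t / 2)) ^ 2 - 1 := by
      rw [show k * t = 2 * (k * (t / 2)) by ring, Real.cos_two_mul]
    linarith
  rw [hc]
  field_simp
  ring

private lemma qcl_tendsto_one_sub_cos_div (t : ℝ) :
    Tendsto (fun k : ℝ => (1 - Real.cos (k * t)) / k) (nhdsWithin 0 (Set.Ioi 0)) (nhds 0) := by
  have hid : Tendsto (fun k : ℝ => k) (nhdsWithin 0 (Set.Ioi 0)) (nhds 0) :=
    tendsto_id.mono_left nhdsWithin_le_nhds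
  have h := (qcl_tendsto_one_sub_cos t).mul hid
  rw [mul_zero] at h
  refine h.congr' ?_
  filter_upwards [self_mem_nhdsWithin] with k hk
  have hk' : (k : ℝ) ≠ 0 := ne_of_gt hk
  field_simp

/-- As `k → 0⁺`, the `K`-quadrilateral cosine expression tends to the
`0`-quadrilateral cosine `(h² + i² − a² − b²)/(2xy)`. -/
theorem quadrilateral_cosine_limit (a b h i x y : ℝ)
    (ha : 0 ≤ a) (hb : 0 ≤ b) (hh : 0 ≤ h) (hi : 0 ≤ i)
    (hx : 0 < x) (hy : 0 < y) :
    Tendsto (fun k : ℝ =>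
      (Real.cos (k * a) + Real.cos (k * y) * Real.cos (k * x) * Real.cos (k * b)
          + Real.cos (k * a) * Real.cos (k * b)
          - Real.cos (k * y) * Real.cos (k * h)
          - Real.cos (k * x) * Real.cos (k * i)
          - Real.cos (k * h) * Real.cos (k * i))
        / ((1 + Real.cos (k * b)) * Real.sin (k * x) * Real.sin (k * y)))
      (nhdsWithin 0 (Set.Ioi 0))
      (nhds ((h ^ 2 + i ^ 2 - a ^ 2 - b ^ 2) / (2 * x * y))) := by
  set l := nhdsWithin (0 : ℝ) (Set.Ioi 0) with hl
  -- numerator over k²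
  have hN : Tendsto (fun k : ℝ =>
      (Real.cos (k * a) + Real.cos (k * y) * Real.cos (k * x) * Real.cos (k * b)
          + Real.cos (k * a) * Real.cos (k * b)
          - Real.cos (k * y) * Real.cos (k * h)
          - Real.cos (k * x) * Real.cos (k * i)
          - Real.cos (k * h) * Real.cos (k * i)) / k ^ 2) l
      (nhds (h ^ 2 + i ^ 2 - a ^ 2 - b ^ 2)) := by
    have hub : Tendsto (fun k : ℝ => 1 - Real.cos (k * b)) l (nhds 0) := by
      have : Continuous fun k : ℝ => 1 - Real.cos (k * b) :=
        continuous_const.sub (Real.continuous_cos.comp (continuous_id.mul continuous_const))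
      exact (this.tendsto' 0 0 (by simp)).mono_left nhdsWithin_le_nhds
    have B : Tendsto (fun k : ℝ =>
        2 * ((1 - Real.cos (k * h)) / k ^ 2 + (1 - Real.cos (k * i)) / k ^ 2
            - (1 - Real.cos (k * a)) / k ^ 2 - (1 - Real.cos (k * b)) / k ^ 2)
        + (((1 - Real.cos (k * y)) / k) * ((1 - Real.cos (k * x)) / k)
          + ((1 - Real.cos (k * y)) / k) * ((1 - Real.cos (k * b)) / k)
          + ((1 - Real.cos (k * x)) / k) * ((1 - Real.cos (k * b)) / k)
          + ((1 - Real.cos (k * a)) / k) * ((1 - Real.cos (k * b)) / k)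
          - ((1 - Real.cos (k * y)) / k) * ((1 - Real.cos (k * h)) / k)
          - ((1 - Real.cos (k * x)) / k) * ((1 - Real.cos (k * i)) / k)
          - ((1 - Real.cos (k * h)) / k) * ((1 - Real.cos (k * i)) / k))
        - ((1 - Real.cos (k * y)) / k) * ((1 - Real.cos (k * x)) / k)
            * (1 - Real.cos (k * b))) l
        (nhds (2 * (h ^ 2 / 2 + i ^ 2 / 2 - a ^ 2 / 2 - b ^ 2 / 2)
          + ((0:ℝ) * 0 + 0 * 0 + 0 * 0 + 0 * 0 - 0 * 0 - 0 * 0 - 0 * 0) - 0 * 0 * 0)) := by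
      refine Tendsto.sub (Tendsto.add ?_ ?_) ?_
      · exact ((((qcl_tendsto_one_sub_cos h).add (qcl_tendsto_one_sub_cos i)).sub
          (qcl_tendsto_one_sub_cos a)).sub (qcl_tendsto_one_sub_cos b)).const_mul 2
      · exact ((((((((qcl_tendsto_one_sub_cos_div y).mul (qcl_tendsto_one_sub_cos_div x)).add
          ((qcl_tendsto_one_sub_cos_div y).mul (qcl_tendsto_one_sub_cos_div b))).add
          ((qcl_tendsto_one_sub_cos_div x).mul (qcl_tendsto_one_sub_cos_div b))).add
          ((qcl_tendsto_one_sub_cos_div a).mul (qcl_tendsto_one_sub_cos_div b))).sub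
          ((qcl_tendsto_one_sub_cos_div y).mul (qcl_tendsto_one_sub_cos_div h))).sub
          ((qcl_tendsto_one_sub_cos_div x).mul (qcl_tendsto_one_sub_cos_div i))).sub
          ((qcl_tendsto_one_sub_cos_div h).mul (qcl_tendsto_one_sub_cos_div i)))
      · exact ((qcl_tendsto_one_sub_cos_div y).mul (qcl_tendsto_one_sub_cos_div x)).mul hub
    rw [show (2 * (h ^ 2 / 2 + i ^ 2 / 2 - a ^ 2 / 2 - b ^ 2 / 2)
          + ((0:ℝ) * 0 + 0 * 0 + 0 * 0 + 0 * 0 - 0 * 0 - 0 * 0 - 0 * 0) - 0 * 0 * 0)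
        = h ^ 2 + i ^ 2 - a ^ 2 - b ^ 2 by ring] at B
    refine B.congr' ?_
    filter_upwards [self_mem_nhdsWithin] with k hk
    have hk' : (k : ℝ) ≠ 0 := ne_of_gt hk
    field_simp
    ring
  -- denominator over k²
  have hD : Tendsto (fun k : ℝ =>
      ((1 + Real.cos (k * b)) * Real.sin (k * x) * Real.sin (k * y)) / k ^ 2) l
      (nhds (2 * x * y)) := by
    have hcb : Tendsto (fun k : ℝ => 1 + Real.cos (k * b)) l (nhds 2) := by
      have : Continuous fun k : ℝ => 1 + Real.cos (k * b) :=
        continuous_const.add (Real.continuous_cos.comp (continuous_id.mul continuous_const))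
      exact (this.tendsto' 0 2 (by norm_num)).mono_left nhdsWithin_le_nhds
    have B := (hcb.mul (qcl_tendsto_sin_div x)).mul (qcl_tendsto_sin_div y)
    refine B.congr' ?_
    filter_upwards [self_mem_nhdsWithin] with k hk
    have hk' : (k : ℝ) ≠ 0 := ne_of_gt hk
    rw [← mul_div_assoc, ← mul_div_assoc, div_mul_eq_mul_div, div_div, ← sq]
  have hD0 : (2 : ℝ) * x * y ≠ 0 := by positivity
  have hfinal := hN.div hD hD0
  refine hfinal.congr' ?_
  filter_upwards [self_mem_nhdsWithin] with k hk
  have hk' : (k : ℝ) ≠ 0 := ne_of_gt hk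
  have hk2 : (k : ℝ) ^ 2 ≠ 0 := pow_ne_zero 2 hk'
  set p := (Real.cos (k * a) + Real.cos (k * y) * Real.cos (k * x) * Real.cos (k * b)
          + Real.cos (k * a) * Real.cos (k * b)
          - Real.cos (k * y) * Real.cos (k * h)
          - Real.cos (k * x) * Real.cos (k * i)
          - Real.cos (k * h) * Real.cos (k * i))
  set q := ((1 + Real.cos (k * b)) * Real.sin (k * x) * Real.sin (k * y))
  simp only [Pi.div_apply]
  exact div_div_div_cancel_right₀ hk2 p q
end

section
/- Let A, B, C, D be points of a real inner product space and let E := (A+B)/2 and F := (C+D)/2. Then ¼·(‖A−B‖ − ‖C−D‖)² ≤ ‖A−D‖² + ‖B−C‖² − 2·‖E−F‖². -/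
/-- Euclidean quadrilateral comparison: for points `A, B, C, D` of a real inner
product space with midpoints `E = (A+B)/2` and `F = (C+D)/2`,
`¼(‖A−B‖ − ‖C−D‖)² ≤ ‖A−D‖² + ‖B−C‖² − 2‖E−F‖²`. -/
theorem euclidean_quadrilateral_comparison
    {H : Type*} [NormedAddCommGroup H] [InnerProductSpace ℝ H]
    (A B C D : H) (E F : H)
    (hE : E = (1 / 2 : ℝ) • (A + B)) (hF : F = (1 / 2 : ℝ) • (C + D)) :
    (1 / 4) * (‖A - B‖ - ‖C - D‖) ^ 2 ≤
      ‖A - D‖ ^ 2 + ‖B - C‖ ^ 2 - 2 * ‖E - F‖ ^ 2 := by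
  subst hE hF
  have key : ‖A - D‖ ^ 2 + ‖B - C‖ ^ 2
      - 2 * ‖(1 / 2 : ℝ) • (A + B) - (1 / 2 : ℝ) • (C + D)‖ ^ 2
      = ‖(A - B) + (C - D)‖ ^ 2 / 2 := by
    simp only [← real_inner_self_eq_norm_sq, inner_sub_left, inner_sub_right,
      inner_add_left, inner_add_right, inner_smul_left, inner_smul_right,
      RCLike.conj_to_real, real_inner_comm A B, real_inner_comm A C,
      real_inner_comm A D, real_inner_comm B C, real_inner_comm B D,
      real_inner_comm C D]
    ring
  rw [key]
  have h1 : |‖A - B‖ - ‖C - D‖| ≤ ‖(A - B) + (C - D)‖ := by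
    have h0 : (A - B) - (D - C) = (A - B) + (C - D) := by abel
    have := abs_norm_sub_norm_le (A - B) (D - C)
    rwa [norm_sub_rev D C, h0] at this
  have h2 : (‖A - B‖ - ‖C - D‖) ^ 2 ≤ ‖(A - B) + (C - D)‖ ^ 2 := by
    calc (‖A - B‖ - ‖C - D‖) ^ 2 = |‖A - B‖ - ‖C - D‖| ^ 2 := (sq_abs _).symm
    _ ≤ ‖(A - B) + (C - D)‖ ^ 2 := by
        apply pow_le_pow_left₀ (abs_nonneg _) h1
  nlinarith [h2]
end

section
/- There exists τ > 0 with the following property. Let A, D, C, B be unit vectors in ℝ³ whose pairwise angles arccos⟨·,·⟩ are all less than τ, and set E := (A+B)/‖A+B‖, F := (C+D)/‖C+D‖, a := arccos⟨A,B⟩, b := arccos⟨C,D⟩, c := arccos⟨E,D⟩, d := arccos⟨A,F⟩, e := arccos⟨B,F⟩, f := arccos⟨E,C⟩. Then 8·(cos(a/2)+1)·(cos(b/2)+1) − 4·(cos c + 1)·(cos d + 1) − 4·(cos e + 1)·(cos f + 1) ≥ 0. -/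
open Real
open scoped RealInnerProductSpace

private lemma cs_aux {V : Type*} [NormedAddCommGroup V] [InnerProductSpace ℝ V]
    (v w z : V) (hwz : ⟪w, z⟫ = 0) :
    ‖w‖ ^ 2 * ⟪v, z⟫ ^ 2 ≤ (‖v‖ ^ 2 * ‖w‖ ^ 2 - ⟪v, w⟫ ^ 2) * ‖z‖ ^ 2 := by
  by_cases hw : w = 0
  · simp [hw]
  · have hwn : 0 < ‖w‖ := norm_pos_iff.mpr hw
    have hw2 : (0:ℝ) < ‖w‖ ^ 2 := by positivity
    set v' : V := ‖w‖ ^ 2 • v - ⟪v, w⟫ • w with hv'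
    have h1 : ⟪v', z⟫ = ‖w‖ ^ 2 * ⟪v, z⟫ := by
      simp [hv', inner_sub_left, real_inner_smul_left, hwz]
    have h2 : ⟪v', v'⟫ = ‖w‖ ^ 2 * (‖v‖ ^ 2 * ‖w‖ ^ 2 - ⟪v, w⟫ ^ 2) := by
      simp only [hv', inner_sub_left, inner_sub_right, real_inner_smul_left,
        real_inner_smul_right]
      simp only [real_inner_self_eq_norm_sq, real_inner_comm w v]
      ring
    have hCS := real_inner_mul_inner_self_le v' z
    rw [h1, h2, real_inner_self_eq_norm_sq z] at hCS
    nlinarith [hCS, hw2, sq_nonneg ⟪v, z⟫]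

private lemma neg_le_of_sq_le_sq (x d : ℝ) (hd : 0 ≤ d) (h : x ^ 2 ≤ d ^ 2) :
    -d ≤ x := by nlinarith

private lemma scalar_key (s t p q r u σ : ℝ) (hs : 0 < s) (ht : 0 < t)
    (hs3 : 3 ≤ s ^ 2) (hs4 : s ^ 2 ≤ 4) (ht3 : 3 ≤ t ^ 2) (ht4 : t ^ 2 ≤ 4)
    (hσ : σ = p + q + r + u)
    (h1 : σ ≤ s * t)
    (h2 : σ ^ 2 ≤ s ^ 2 * t ^ 2)
    (h3 : t ^ 2 * (p - q + r - u) ^ 2 ≤ (s ^ 2 * t ^ 2 - σ ^ 2) * (4 - t ^ 2))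
    (h4 : s ^ 2 * (p + q - r - u) ^ 2 ≤ (s ^ 2 * t ^ 2 - σ ^ 2) * (4 - s ^ 2)) :
    0 ≤ s * t * (s + 2) * (t + 2) - 2 * (s + q + u) * (t + p + q)
        - 2 * (t + r + u) * (s + p + r) := by
  subst hσ
  obtain ⟨X, hX⟩ : ∃ x : ℝ, x = p - q + r - u := ⟨_, rfl⟩
  obtain ⟨Y, hY⟩ : ∃ x : ℝ, x = p + q - r - u := ⟨_, rfl⟩
  obtain ⟨D, hD⟩ : ∃ x : ℝ, x = s ^ 2 * t ^ 2 - (p + q + r + u) ^ 2 := ⟨_, rfl⟩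
  rw [← hX, ← hD] at h3
  rw [← hY, ← hD] at h4
  have hDnn : 0 ≤ D := by rw [hD]; linarith
  have h4t : (0:ℝ) ≤ 4 - t ^ 2 := by linarith
  have h4s : (0:ℝ) ≤ 4 - s ^ 2 := by linarith
  have hprod : (t ^ 2 * X ^ 2) * (s ^ 2 * Y ^ 2) ≤ (D * (4 - t ^ 2)) * (D * (4 - s ^ 2)) :=
    mul_le_mul h3 h4 (by positivity) (mul_nonneg hDnn h4t)
  have e1 : D ^ 2 * (4 - s ^ 2) * (4 - t ^ 2) ≤ D ^ 2 := by
    have hle : (4 - s ^ 2) * (4 - t ^ 2) ≤ 1 := by nlinarith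
    nlinarith [sq_nonneg D, mul_nonneg h4s h4t]
  have e2 : s ^ 2 * t ^ 2 * (X * Y) ^ 2 ≤ D ^ 2 := by nlinarith [hprod, e1]
  have h9 : (1:ℝ) ≤ s ^ 2 * t ^ 2 := by nlinarith
  have hXY2 : (X * Y) ^ 2 ≤ D ^ 2 := by
    nlinarith [e2, mul_nonneg (sub_nonneg.mpr h9) (sq_nonneg (X * Y))]
  have hmXY : -D ≤ X * Y := neg_le_of_sq_le_sq _ _ hDnn hXY2
  have hq : 0 ≤ (s + t) * (s * t - (p + q + r + u)) :=
    mul_nonneg (by linarith) (by linarith)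
  have hfin : 0 ≤ X * Y + D + 2 * ((s + t) * (s * t - (p + q + r + u))) := by
    linarith [hmXY, hq]
  rw [hX, hY, hD] at hfin
  linarith [hfin]

private lemma inner_gt_half {V : Type*} [NormedAddCommGroup V] [InnerProductSpace ℝ V]
    (u v : V) (hu : ‖u‖ = 1) (hv : ‖v‖ = 1)
    (h : Real.arccos ⟪u, v⟫ < π / 3) : 1 / 2 < ⟪u, v⟫ := by
  have h1 : |⟪u, v⟫| ≤ 1 := by
    have := abs_real_inner_le_norm u v
    rwa [hu, hv, mul_one] at this
  obtain ⟨hl, hr⟩ := abs_le.mp h1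
  have := Real.cos_lt_cos_of_nonneg_of_le_pi (Real.arccos_nonneg _)
    (by linarith [Real.pi_pos]) h
  rwa [Real.cos_arccos hl hr, Real.cos_pi_div_three] at this

private lemma cos_arccos_inner {V : Type*} [NormedAddCommGroup V] [InnerProductSpace ℝ V]
    (u v : V) (hu : ‖u‖ = 1) (hv : ‖v‖ = 1) :
    Real.cos (Real.arccos ⟪u, v⟫) = ⟪u, v⟫ := by
  have h := abs_real_inner_le_norm u v
  rw [hu, hv, mul_one] at h
  obtain ⟨hl, hr⟩ := abs_le.mp h
  exact Real.cos_arccos hl hr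

private lemma cos_half_arccos {x : ℝ} (h1 : -1 ≤ x) (h2 : x ≤ 1) :
    Real.cos (Real.arccos x / 2) = Real.sqrt ((1 + x) / 2) := by
  rw [Real.cos_half (by linarith [Real.arccos_nonneg x, Real.pi_pos])
    (Real.arccos_le_pi x), Real.cos_arccos h1 h2]

/-- Nonnegativity of the quantity `V` (Lemma C.3 of the paper, curvature `K = 1`):
for an ordered quadruple `{A,D,C,B}` of unit vectors of `ℝ³` lying in a small
geodesic ball, with `E`, `F` the geodesic midpoints of the arcs `AB` and `CD`,
`8(cos(a/2)+1)(cos(b/2)+1) − 4(cos c+1)(cos d+1) − 4(cos e+1)(cos f+1) ≥ 0`. -/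
theorem V_nonneg :
    ∃ τ : ℝ, 0 < τ ∧
      ∀ A D C B : EuclideanSpace ℝ (Fin 3),
        ‖A‖ = 1 → ‖D‖ = 1 → ‖C‖ = 1 → ‖B‖ = 1 →
        Real.arccos ⟪A, D⟫ < τ → Real.arccos ⟪A, C⟫ < τ →
        Real.arccos ⟪A, B⟫ < τ → Real.arccos ⟪D, C⟫ < τ →
        Real.arccos ⟪D, B⟫ < τ → Real.arccos ⟪C, B⟫ < τ →
        ∀ E F : EuclideanSpace ℝ (Fin 3),
          E = ‖A + B‖⁻¹ • (A + B) → F = ‖C + D‖⁻¹ • (C + D) →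
          ∀ a b c d e f : ℝ,
            a = Real.arccos ⟪A, B⟫ → b = Real.arccos ⟪C, D⟫ →
            c = Real.arccos ⟪E, D⟫ → d = Real.arccos ⟪A, F⟫ →
            e = Real.arccos ⟪B, F⟫ → f = Real.arccos ⟪E, C⟫ →
            0 ≤ 8 * (Real.cos (a / 2) + 1) * (Real.cos (b / 2) + 1)
                - 4 * (Real.cos c + 1) * (Real.cos d + 1)
                - 4 * (Real.cos e + 1) * (Real.cos f + 1) := by
  refine ⟨π / 3, by positivity, ?_⟩
  intro A D C B hA hD hC hB hAD hAC hAB hDC hDB hCB E F hE hF a b c d e f ha hb hc hd he hf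
  subst hE hF ha hb hc hd he hf
  -- notation for inner products
  have hm : 1 / 2 < ⟪A, B⟫ := inner_gt_half A B hA hB hAB
  have hn0 : 1 / 2 < ⟪D, C⟫ := inner_gt_half D C hD hC hDC
  have hn : 1 / 2 < ⟪C, D⟫ := by rwa [real_inner_comm] at hn0
  have hm1 : ⟪A, B⟫ ≤ 1 := by
    have := real_inner_le_norm A B; rwa [hA, hB, mul_one] at this
  have hn1 : ⟪C, D⟫ ≤ 1 := by
    have := real_inner_le_norm C D; rwa [hC, hD, mul_one] at this
  -- norms of sums
  have hs2 : ‖A + B‖ ^ 2 = 2 + 2 * ⟪A, B⟫ := by rw [norm_add_sq_real, hA, hB]; ring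
  have ht2 : ‖C + D‖ ^ 2 = 2 + 2 * ⟪C, D⟫ := by rw [norm_add_sq_real, hC, hD]; ring
  have hs3 : 3 ≤ ‖A + B‖ ^ 2 := by rw [hs2]; linarith
  have hs4 : ‖A + B‖ ^ 2 ≤ 4 := by rw [hs2]; linarith
  have ht3 : 3 ≤ ‖C + D‖ ^ 2 := by rw [ht2]; linarith
  have ht4 : ‖C + D‖ ^ 2 ≤ 4 := by rw [ht2]; linarith
  have hs : 0 < ‖A + B‖ := by
    rcases (norm_nonneg (A + B)).lt_or_eq with h | h
    · exact h
    · rw [← h] at hs3; norm_num at hs3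
  have ht : 0 < ‖C + D‖ := by
    rcases (norm_nonneg (C + D)).lt_or_eq with h | h
    · exact h
    · rw [← h] at ht3; norm_num at ht3
  -- midpoints are unit vectors
  have hE1 : ‖(‖A + B‖⁻¹ • (A + B) : EuclideanSpace ℝ (Fin 3))‖ = 1 := by
    rw [norm_smul, norm_inv, norm_norm, inv_mul_cancel₀ hs.ne']
  have hF1 : ‖(‖C + D‖⁻¹ • (C + D) : EuclideanSpace ℝ (Fin 3))‖ = 1 := by
    rw [norm_smul, norm_inv, norm_norm, inv_mul_cancel₀ ht.ne']
  -- the six cosines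
  have hca : Real.cos (Real.arccos ⟪A, B⟫ / 2) = ‖A + B‖ / 2 := by
    rw [cos_half_arccos (by linarith) hm1]
    rw [show (1 + ⟪A, B⟫) / 2 = (‖A + B‖ / 2) ^ 2 by rw [div_pow, hs2]; ring]
    exact Real.sqrt_sq (by positivity)
  have hcb : Real.cos (Real.arccos ⟪C, D⟫ / 2) = ‖C + D‖ / 2 := by
    rw [cos_half_arccos (by linarith) hn1]
    rw [show (1 + ⟪C, D⟫) / 2 = (‖C + D‖ / 2) ^ 2 by rw [div_pow, ht2]; ring]
    exact Real.sqrt_sq (by positivity)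
  have hcc : Real.cos (Real.arccos ⟪(‖A + B‖⁻¹ • (A + B) : EuclideanSpace ℝ (Fin 3)), D⟫)
      = ‖A + B‖⁻¹ * (⟪A, D⟫ + ⟪B, D⟫) := by
    rw [cos_arccos_inner _ D hE1 hD, real_inner_smul_left, inner_add_left]
  have hcf : Real.cos (Real.arccos ⟪(‖A + B‖⁻¹ • (A + B) : EuclideanSpace ℝ (Fin 3)), C⟫)
      = ‖A + B‖⁻¹ * (⟪A, C⟫ + ⟪B, C⟫) := by
    rw [cos_arccos_inner _ C hE1 hC, real_inner_smul_left, inner_add_left]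
  have hcd : Real.cos (Real.arccos ⟪A, (‖C + D‖⁻¹ • (C + D) : EuclideanSpace ℝ (Fin 3))⟫)
      = ‖C + D‖⁻¹ * (⟪A, C⟫ + ⟪A, D⟫) := by
    rw [cos_arccos_inner A _ hA hF1, real_inner_smul_right, inner_add_right]
  have hce : Real.cos (Real.arccos ⟪B, (‖C + D‖⁻¹ • (C + D) : EuclideanSpace ℝ (Fin 3))⟫)
      = ‖C + D‖⁻¹ * (⟪B, C⟫ + ⟪B, D⟫) := by
    rw [cos_arccos_inner B _ hB hF1, real_inner_smul_right, inner_add_right]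
  -- Cauchy–Schwarz inputs for the scalar inequality
  have hσexp : ⟪A + B, C + D⟫ = ⟪A, C⟫ + ⟪A, D⟫ + ⟪B, C⟫ + ⟪B, D⟫ := by
    rw [inner_add_left, inner_add_right, inner_add_right]; ring
  have h1 : ⟪A + B, C + D⟫ ≤ ‖A + B‖ * ‖C + D‖ := real_inner_le_norm _ _
  have h2 : ⟪A + B, C + D⟫ ^ 2 ≤ ‖A + B‖ ^ 2 * ‖C + D‖ ^ 2 := by
    have habs := abs_real_inner_le_norm (A + B) (C + D)
    calc ⟪A + B, C + D⟫ ^ 2 = |⟪A + B, C + D⟫| ^ 2 := (sq_abs _).symm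
      _ ≤ (‖A + B‖ * ‖C + D‖) ^ 2 := by
          exact pow_le_pow_left₀ (abs_nonneg _) habs 2
      _ = ‖A + B‖ ^ 2 * ‖C + D‖ ^ 2 := mul_pow _ _ _
  have hwz1 : ⟪(C + D : EuclideanSpace ℝ (Fin 3)), C - D⟫ = 0 := by
    rw [inner_sub_right, inner_add_left, inner_add_left,
      real_inner_self_eq_norm_sq, real_inner_self_eq_norm_sq, hC, hD, real_inner_comm D C]
    ring
  have hwz2 : ⟪(A + B : EuclideanSpace ℝ (Fin 3)), A - B⟫ = 0 := by
    rw [inner_sub_right, inner_add_left, inner_add_left,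
      real_inner_self_eq_norm_sq, real_inner_self_eq_norm_sq, hA, hB, real_inner_comm B A]
    ring
  have h3raw := cs_aux (A + B) (C + D) (C - D) hwz1
  have h4raw := cs_aux (C + D) (A + B) (A - B) hwz2
  have hXeq : ⟪(A + B : EuclideanSpace ℝ (Fin 3)), C - D⟫
      = ⟪A, C⟫ - ⟪A, D⟫ + ⟪B, C⟫ - ⟪B, D⟫ := by
    rw [inner_sub_right, inner_add_left, inner_add_left]; ring
  have hYeq : ⟪(C + D : EuclideanSpace ℝ (Fin 3)), A - B⟫
      = ⟪A, C⟫ + ⟪A, D⟫ - ⟪B, C⟫ - ⟪B, D⟫ := by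
    rw [real_inner_comm, inner_sub_left, inner_add_right, inner_add_right,
      real_inner_comm C B, real_inner_comm D B]
    ring
  have hCD2 : ‖(C - D : EuclideanSpace ℝ (Fin 3))‖ ^ 2 = 4 - ‖C + D‖ ^ 2 := by
    rw [norm_sub_sq_real, hC, hD, ht2]; ring
  have hAB2 : ‖(A - B : EuclideanSpace ℝ (Fin 3))‖ ^ 2 = 4 - ‖A + B‖ ^ 2 := by
    rw [norm_sub_sq_real, hA, hB, hs2]; ring
  rw [hXeq, hCD2, hσexp] at h3raw
  rw [hYeq, hAB2, real_inner_comm (A + B) (C + D), hσexp] at h4raw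
  have h3 : ‖C + D‖ ^ 2 * (⟪A, C⟫ - ⟪A, D⟫ + ⟪B, C⟫ - ⟪B, D⟫) ^ 2
      ≤ (‖A + B‖ ^ 2 * ‖C + D‖ ^ 2 - (⟪A, C⟫ + ⟪A, D⟫ + ⟪B, C⟫ + ⟪B, D⟫) ^ 2)
        * (4 - ‖C + D‖ ^ 2) := h3raw
  have h4 : ‖A + B‖ ^ 2 * (⟪A, C⟫ + ⟪A, D⟫ - ⟪B, C⟫ - ⟪B, D⟫) ^ 2
      ≤ (‖A + B‖ ^ 2 * ‖C + D‖ ^ 2 - (⟪A, C⟫ + ⟪A, D⟫ + ⟪B, C⟫ + ⟪B, D⟫) ^ 2)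
        * (4 - ‖A + B‖ ^ 2) := by linarith [h4raw]
  rw [hσexp] at h1 h2
  have hkey := scalar_key ‖A + B‖ ‖C + D‖ ⟪A, C⟫ ⟪A, D⟫ ⟪B, C⟫ ⟪B, D⟫
    (⟪A, C⟫ + ⟪A, D⟫ + ⟪B, C⟫ + ⟪B, D⟫) hs ht hs3 hs4 ht3 ht4 rfl h1 h2 h3 h4
  rw [hca, hcb, hcc, hcd, hce, hcf]
  have hfrac : 8 * (‖A + B‖ / 2 + 1) * (‖C + D‖ / 2 + 1)
      - 4 * (‖A + B‖⁻¹ * (⟪A, D⟫ + ⟪B, D⟫) + 1) * (‖C + D‖⁻¹ * (⟪A, C⟫ + ⟪A, D⟫) + 1)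
      - 4 * (‖C + D‖⁻¹ * (⟪B, C⟫ + ⟪B, D⟫) + 1) * (‖A + B‖⁻¹ * (⟪A, C⟫ + ⟪B, C⟫) + 1)
      = 2 * (‖A + B‖ * ‖C + D‖ * (‖A + B‖ + 2) * (‖C + D‖ + 2)
          - 2 * (‖A + B‖ + ⟪A, D⟫ + ⟪B, D⟫) * (‖C + D‖ + ⟪A, C⟫ + ⟪A, D⟫)
          - 2 * (‖C + D‖ + ⟪B, C⟫ + ⟪B, D⟫) * (‖A + B‖ + ⟪A, C⟫ + ⟪B, C⟫))
        / (‖A + B‖ * ‖C + D‖) := by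
    field_simp
    ring
  rw [hfrac]
  exact div_nonneg (by linarith [hkey]) (by positivity)
end

section
/- Let a, b ∈ [0, π] with a + b ≤ π, and let σ, ς be arbitrary real numbers. Then 8·(cos(a/2)+1)·(cos(b/2)+1) − 4·(cos(b/2 − σ)+1)·(cos(a/2 + ς)+1) − 4·(cos(a/2 − ς)+1)·(cos(b/2 + σ)+1) = 8·(1−cos σ)·cos(b/2) + 8·(1−cos ς)·cos(a/2) + 4·(1−cos(ς−σ))·cos((a+b)/2) + 4·(1−cos(ς+σ))·cos((a−b)/2); in particular, the left-hand side is nonnegative. -/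
open Real

/-- The trigonometric identity and nonnegativity at the core of Lemma C.3. -/
theorem V_identity_and_nonneg (a b σ ς : ℝ)
    (ha : a ∈ Set.Icc 0 π) (hb : b ∈ Set.Icc 0 π) (hab : a + b ≤ π) :
    (8 * (Real.cos (a / 2) + 1) * (Real.cos (b / 2) + 1)
        - 4 * (Real.cos (b / 2 - σ) + 1) * (Real.cos (a / 2 + ς) + 1)
        - 4 * (Real.cos (a / 2 - ς) + 1) * (Real.cos (b / 2 + σ) + 1)
      = 8 * (1 - Real.cos σ) * Real.cos (b / 2)
        + 8 * (1 - Real.cos ς) * Real.cos (a / 2)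
        + 4 * (1 - Real.cos (ς - σ)) * Real.cos ((a + b) / 2)
        + 4 * (1 - Real.cos (ς + σ)) * Real.cos ((a - b) / 2))
    ∧ 0 ≤ 8 * (Real.cos (a / 2) + 1) * (Real.cos (b / 2) + 1)
        - 4 * (Real.cos (b / 2 - σ) + 1) * (Real.cos (a / 2 + ς) + 1)
        - 4 * (Real.cos (a / 2 - ς) + 1) * (Real.cos (b / 2 + σ) + 1) := by
  obtain ⟨ha0, ha1⟩ := ha
  obtain ⟨hb0, hb1⟩ := hb
  have hid : (8 * (Real.cos (a / 2) + 1) * (Real.cos (b / 2) + 1)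
        - 4 * (Real.cos (b / 2 - σ) + 1) * (Real.cos (a / 2 + ς) + 1)
        - 4 * (Real.cos (a / 2 - ς) + 1) * (Real.cos (b / 2 + σ) + 1)
      = 8 * (1 - Real.cos σ) * Real.cos (b / 2)
        + 8 * (1 - Real.cos ς) * Real.cos (a / 2)
        + 4 * (1 - Real.cos (ς - σ)) * Real.cos ((a + b) / 2)
        + 4 * (1 - Real.cos (ς + σ)) * Real.cos ((a - b) / 2)) := by
    have h1 : (a + b) / 2 = a / 2 + b / 2 := by ring
    have h2 : (a - b) / 2 = a / 2 - b / 2 := by ring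
    rw [h1, h2, Real.cos_add, Real.cos_sub, Real.cos_add, Real.cos_sub,
      Real.cos_add, Real.cos_sub, Real.cos_sub, Real.cos_add]
    ring
  refine ⟨hid, ?_⟩
  rw [hid]
  have pi2 : 0 < π := Real.pi_pos
  have c1 : 0 ≤ Real.cos (b / 2) := Real.cos_nonneg_of_mem_Icc ⟨by linarith, by linarith⟩
  have c2 : 0 ≤ Real.cos (a / 2) := Real.cos_nonneg_of_mem_Icc ⟨by linarith, by linarith⟩
  have c3 : 0 ≤ Real.cos ((a + b) / 2) := Real.cos_nonneg_of_mem_Icc ⟨by linarith, by linarith⟩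
  have c4 : 0 ≤ Real.cos ((a - b) / 2) := Real.cos_nonneg_of_mem_Icc ⟨by linarith, by linarith⟩
  have d1 := Real.cos_le_one σ
  have d2 := Real.cos_le_one ς
  have d3 := Real.cos_le_one (ς - σ)
  have d4 := Real.cos_le_one (ς + σ)
  nlinarith [mul_nonneg (by linarith : (0:ℝ) ≤ 1 - Real.cos σ) c1, mul_nonneg (by linarith : (0:ℝ) ≤ 1 - Real.cos ς) c2, mul_nonneg (by linarith : (0:ℝ) ≤ 1 - Real.cos (ς - σ)) c3, mul_nonneg (by linarith : (0:ℝ) ≤ 1 - Real.cos (ς + σ)) c4]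
end

section
/- Let C, D, E be unit vectors of a real inner product space with ⟨C,D⟩ ≠ −1, let F := (C+D)/‖C+D‖, and set b := arccos⟨C,D⟩ and g := arccos⟨E,F⟩. Then ‖C−E‖² + ‖D−E‖² − ‖C−F‖² − ‖D−F‖² = 2·( sin²g − 4·(1−cos(b/2))·sin²(g/2) + 4·sin⁴(g/2) ). -/
open Real
open scoped RealInnerProductSpace

set_option maxHeartbeats 1000000 in
/-- The exact identity (68) of Appendix C (curvature `K = 1`): for unit vectors
`C`, `D`, `E` with `⟪C,D⟫ ≠ −1` and `F` the geodesic midpoint of `C` and `D`,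
writing `b = arccos⟪C,D⟫` and `g = arccos⟪E,F⟫`,
`‖C−E‖² + ‖D−E‖² − ‖C−F‖² − ‖D−F‖² = 2(sin²g − 4(1−cos(b/2))sin²(g/2) + 4sin⁴(g/2))`. -/
theorem chordal_identity
    {H : Type*} [NormedAddCommGroup H] [InnerProductSpace ℝ H]
    (C D E : H) (hC : ‖C‖ = 1) (hD : ‖D‖ = 1) (hE : ‖E‖ = 1)
    (hCD : ⟪C, D⟫ ≠ -1)
    (F : H) (hF : F = ‖C + D‖⁻¹ • (C + D))
    (b g : ℝ) (hb : b = Real.arccos ⟪C, D⟫) (hg : g = Real.arccos ⟪E, F⟫) :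
    ‖C - E‖ ^ 2 + ‖D - E‖ ^ 2 - ‖C - F‖ ^ 2 - ‖D - F‖ ^ 2 =
      2 * (Real.sin g ^ 2 - 4 * (1 - Real.cos (b / 2)) * Real.sin (g / 2) ^ 2
        + 4 * Real.sin (g / 2) ^ 4) := by
  set t : ℝ := ⟪C, D⟫ with ht
  have habs : |t| ≤ 1 := by
    have := abs_real_inner_le_norm C D
    rwa [hC, hD, one_mul] at this
  have ht1 : t ≤ 1 := (abs_le.mp habs).2
  have ht2 : -1 ≤ t := (abs_le.mp habs).1
  have ht2' : -1 < t := lt_of_le_of_ne ht2 (Ne.symm hCD)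
  have hs2 : ‖C + D‖ ^ 2 = 2 + 2 * t := by
    rw [norm_add_sq_real, hC, hD]; ring
  have hspos : 0 < ‖C + D‖ := by
    have h2 : (0:ℝ) < ‖C + D‖ ^ 2 := by nlinarith
    rcases (norm_nonneg (C + D)).lt_or_eq with h | h
    · exact h
    · exfalso; rw [← h] at h2; simp at h2
  set s : ℝ := ‖C + D‖ with hs
  have hsinv : s⁻¹ * s = 1 := inv_mul_cancel₀ hspos.ne'
  have hCC : ⟪C, C⟫ = 1 := by rw [real_inner_self_eq_norm_sq, hC]; norm_num
  have hDD : ⟪D, D⟫ = 1 := by rw [real_inner_self_eq_norm_sq, hD]; norm_num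
  have hCF : ⟪C, F⟫ = s⁻¹ * (1 + t) := by
    rw [hF, real_inner_smul_right, inner_add_right, hCC, ht]
  have hDF : ⟪D, F⟫ = s⁻¹ * (1 + t) := by
    have hdc : (⟪D, C⟫ : ℝ) = t := by rw [real_inner_comm]
    rw [hF, real_inner_smul_right, inner_add_right, hDD, hdc]; ring
  have hEF : ⟪E, F⟫ = s⁻¹ * (⟪E, C⟫ + ⟪E, D⟫) := by
    rw [hF, real_inner_smul_right, inner_add_right]
  have hF1 : ‖F‖ = 1 := by
    rw [hF, norm_smul, norm_inv, Real.norm_eq_abs, abs_of_pos hspos, hsinv]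
  have hEFabs : |⟪E, F⟫| ≤ 1 := by
    have := abs_real_inner_le_norm E F
    rwa [hE, hF1, one_mul] at this
  have hcosb : Real.cos b = t := by rw [hb]; exact Real.cos_arccos ht2 ht1
  have hcosg : Real.cos g = ⟪E, F⟫ := by
    rw [hg]; exact Real.cos_arccos (abs_le.mp hEFabs).1 (abs_le.mp hEFabs).2
  have hcb2 : Real.cos (b / 2) ^ 2 = (1 + t) / 2 := by
    have := Real.cos_sq (b / 2)
    rw [mul_div_cancel₀ b (two_ne_zero), hcosb] at this
    linarith
  have hcb2nn : 0 ≤ Real.cos (b / 2) := by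
    apply Real.cos_nonneg_of_mem_Icc
    constructor
    · have : 0 ≤ b := hb ▸ Real.arccos_nonneg _
      linarith [Real.pi_pos]
    · have : b ≤ Real.pi := hb ▸ Real.arccos_le_pi _
      linarith
  have hseq : s = 2 * Real.cos (b / 2) := by
    nlinarith [hspos.le]
  have hsg2 : Real.sin (g / 2) ^ 2 = (1 - Real.cos g) / 2 := by
    have h1 := Real.sin_sq (g / 2)
    have h2 := Real.cos_sq (g / 2)
    rw [mul_div_cancel₀ g (two_ne_zero)] at h2
    rw [h1, h2]; ring
  have hsing : Real.sin g ^ 2 = 1 - Real.cos g ^ 2 := Real.sin_sq g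
  have hCE : ‖C - E‖ ^ 2 = 2 - 2 * ⟪C, E⟫ := by
    rw [norm_sub_sq_real, hC, hE]; ring
  have hDE : ‖D - E‖ ^ 2 = 2 - 2 * ⟪D, E⟫ := by
    rw [norm_sub_sq_real, hD, hE]; ring
  have hCF2 : ‖C - F‖ ^ 2 = 2 - 2 * (s⁻¹ * (1 + t)) := by
    rw [norm_sub_sq_real, hC, hF1, hCF]; ring
  have hDF2 : ‖D - F‖ ^ 2 = 2 - 2 * (s⁻¹ * (1 + t)) := by
    rw [norm_sub_sq_real, hD, hF1, hDF]; ring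
  have hsum : ⟪C, E⟫ + ⟪D, E⟫ = s * Real.cos g := by
    rw [hcosg, hEF, real_inner_comm C E, real_inner_comm D E, ← mul_assoc,
      mul_inv_cancel₀ hspos.ne', one_mul]
  have hinv : s⁻¹ * (1 + t) = s / 2 := by
    rw [inv_mul_eq_div, div_eq_div_iff hspos.ne' (two_ne_zero)]
    nlinarith
  have key : ⟪C, E⟫ + ⟪D, E⟫ = 2 * Real.cos (b / 2) * Real.cos g := hseq ▸ hsum
  have h4 : Real.sin (g / 2) ^ 4 = ((1 - Real.cos g) / 2) ^ 2 := by
    rw [← hsg2]; ring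
  rw [hCE, hDE, hCF2, hDF2, hinv, hseq, hsing, h4, hsg2]
  linear_combination (-2 : ℝ) * key
end

section
/- There exists τ > 0 with the following property. Let C, D, E be unit vectors of a real inner product space with b := arccos⟨C,D⟩ < τ, let F := (C+D)/‖C+D‖, and suppose g := arccos⟨E,F⟩ satisfies 0 < g < τ. Then ‖C−E‖² + ‖D−E‖² − ‖C−F‖² − ‖D−F‖² > cos(b/2)·g². -/
open Real
open scoped RealInnerProductSpace


lemma chordal_aux {g : ℝ} (h0 : 0 < g) (h1 : g < 1) :
    g ^ 2 < 4 * (1 - Real.cos g) := by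
  have hsin : Real.sin (g/2) > g/2 - (g/2)^3 / 4 :=
    by have := Real.sin_gt_sub_cube (x := g/2) (by linarith); linarith [pow_pos (show (0:ℝ) < g/2 by linarith) 3]
  have hcosg : Real.cos g = 1 - 2 * Real.sin (g/2) ^ 2 := by
    have h2 : Real.cos (2 * (g/2)) = 2 * Real.cos (g/2) ^ 2 - 1 := Real.cos_two_mul _
    have h3 := Real.sin_sq_add_cos_sq (g/2)
    rw [show 2 * (g/2) = g by ring] at h2
    linarith
  have hg3 : g^3 < g := by nlinarith [mul_pos h0 h0]
  have hlow : (0:ℝ) < g/2 - (g/2)^3 / 4 := by nlinarith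
  have hs2 : Real.sin (g/2) ^ 2 > (g/2 - (g/2)^3 / 4) ^ 2 := by
    nlinarith [hsin, hlow]
  rw [hcosg]
  nlinarith [hs2, mul_pos h0 h0, sq_nonneg (g^2), mul_pos (mul_pos h0 h0) (mul_pos h0 h0)]


/-- The strict inequality concluding display (68) of Appendix C: for `b` and `g`
sufficiently small and `g > 0`,
`‖C−E‖² + ‖D−E‖² − ‖C−F‖² − ‖D−F‖² > cos(b/2)·g²`. -/
theorem chordal_strict_inequality :
    ∃ τ : ℝ, 0 < τ ∧
      ∀ (H : Type*) [NormedAddCommGroup H] [InnerProductSpace ℝ H]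
        (C D E : H), ‖C‖ = 1 → ‖D‖ = 1 → ‖E‖ = 1 →
        ∀ b : ℝ, b = Real.arccos ⟪C, D⟫ → b < τ →
        ∀ F : H, F = ‖C + D‖⁻¹ • (C + D) →
        ∀ g : ℝ, g = Real.arccos ⟪E, F⟫ → 0 < g → g < τ →
        Real.cos (b / 2) * g ^ 2 <
          ‖C - E‖ ^ 2 + ‖D - E‖ ^ 2 - ‖C - F‖ ^ 2 - ‖D - F‖ ^ 2 := by
  refine ⟨1, one_pos, ?_⟩
  intro H _ _ C D E hC hD hE b hb hbτ F hF g hg hg0 hgτ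
  have hπ := Real.pi_gt_three
  have hb0 : 0 ≤ b := hb ▸ Real.arccos_nonneg _
  have hcosb2 : 0 < Real.cos (b/2) :=
    Real.cos_pos_of_mem_Ioo ⟨by linarith, by linarith⟩
  have hCDabs : |⟪C, D⟫| ≤ 1 := by
    have := abs_real_inner_le_norm C D
    rwa [hC, hD, one_mul] at this
  have hCD : ⟪C, D⟫ = Real.cos b := by
    rw [hb, Real.cos_arccos (by linarith [abs_le.mp hCDabs |>.1])
      (abs_le.mp hCDabs |>.2)]
  have hDC : ⟪D, C⟫ = Real.cos b := by rw [real_inner_comm C D, hCD]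
  have h2 : Real.cos (b/2) ^ 2 = 1/2 + Real.cos b / 2 := by
    have := Real.cos_sq (b/2)
    rwa [show 2 * (b/2) = b by ring] at this
  have hsq : ‖C + D‖ ^ 2 = (2 * Real.cos (b/2)) ^ 2 := by
    have h1 := norm_add_sq_real C D
    rw [hC, hD] at h1
    linear_combination h1 + 2 * hCD - 4 * h2
  have hc2 : (0:ℝ) < 2 * Real.cos (b/2) := by positivity
  have hs : ‖C + D‖ = 2 * Real.cos (b/2) := by
    calc ‖C + D‖ = √(‖C + D‖ ^ 2) := (Real.sqrt_sq (norm_nonneg _)).symm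
      _ = √((2 * Real.cos (b/2)) ^ 2) := by rw [hsq]
      _ = 2 * Real.cos (b/2) := Real.sqrt_sq hc2.le
  have hspos : 0 < ‖C + D‖ := by rw [hs]; positivity
  have hF1 : ‖F‖ = 1 := by
    rw [hF, norm_smul, norm_inv, norm_norm, inv_mul_cancel₀ hspos.ne']
  have hEFabs : |⟪E, F⟫| ≤ 1 := by
    have := abs_real_inner_le_norm E F
    rwa [hE, hF1, one_mul] at this
  have hEF : ⟪E, F⟫ = Real.cos g := by
    rw [hg, Real.cos_arccos (by linarith [abs_le.mp hEFabs |>.1])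
      (abs_le.mp hEFabs |>.2)]
  have hcc : (1:ℝ)^2 + Real.cos b = 2 * Real.cos (b/2) * Real.cos (b/2) := by
    linear_combination -2 * h2
  have hCF : ⟪C, F⟫ = Real.cos (b/2) := by
    rw [hF, real_inner_smul_right, inner_add_right, real_inner_self_eq_norm_sq, hC,
      hCD, hs, hcc, inv_mul_cancel_left₀ hc2.ne']
  have hDF : ⟪D, F⟫ = Real.cos (b/2) := by
    rw [hF, real_inner_smul_right, inner_add_right, real_inner_self_eq_norm_sq, hD,
      hDC, hs, show Real.cos b + (1:ℝ)^2 = 2 * Real.cos (b/2) * Real.cos (b/2) by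
        linear_combination -2 * h2,
      inv_mul_cancel_left₀ hc2.ne']
  have hEsum : ⟪C, E⟫ + ⟪D, E⟫ = 2 * Real.cos (b/2) * Real.cos g := by
    have h1 : ⟪E, F⟫ = ‖C + D‖⁻¹ * (⟪E, C⟫ + ⟪E, D⟫) := by
      rw [hF, real_inner_smul_right, inner_add_right]
    rw [hEF, real_inner_comm C E, real_inner_comm D E, hs] at h1
    have h3 : (2 * Real.cos (b/2)) * Real.cos g
        = (2 * Real.cos (b/2)) * ((2 * Real.cos (b/2))⁻¹ * (⟪C, E⟫ + ⟪D, E⟫)) := by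
      rw [← h1]
    rw [← mul_assoc, mul_inv_cancel₀ hc2.ne', one_mul] at h3
    linarith
  have e1 := norm_sub_sq_real C E
  have e2 := norm_sub_sq_real D E
  have e3 := norm_sub_sq_real C F
  have e4 := norm_sub_sq_real D F
  rw [hC, hE] at e1; rw [hD, hE] at e2
  rw [hC, hF1] at e3; rw [hD, hF1] at e4
  have key : ‖C - E‖ ^ 2 + ‖D - E‖ ^ 2 - ‖C - F‖ ^ 2 - ‖D - F‖ ^ 2
      = 4 * Real.cos (b/2) * (1 - Real.cos g) := by
    rw [e1, e2, e3, e4, hCF, hDF]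
    linear_combination (-2 : ℝ) * hEsum
  rw [key]
  calc Real.cos (b/2) * g ^ 2 < Real.cos (b/2) * (4 * (1 - Real.cos g)) :=
        (mul_lt_mul_iff_right₀ hcosb2).mpr (chordal_aux hg0 hgτ)
    _ = 4 * Real.cos (b/2) * (1 - Real.cos g) := by ring
end

section
/- Let u, v, w, θ be real numbers with 0 ≤ w ≤ v, and let n be a positive integer. Then ((u + v·cos θ)² + (v·sin θ)²)ⁿ + ((u − v·cos θ)² + (v·sin θ)²)ⁿ − 2·(u² + w²)ⁿ ≥ 2·((u² + v²)ⁿ − (u² + w²)ⁿ) ≥ 0. -/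
/-- Inequality (69) of Appendix C: for `0 ≤ w ≤ v`, `θ ∈ ℝ` and `n ≥ 1`,
`((u+v·cosθ)² + (v·sinθ)²)ⁿ + ((u−v·cosθ)² + (v·sinθ)²)ⁿ − 2(u²+w²)ⁿ
  ≥ 2((u²+v²)ⁿ − (u²+w²)ⁿ) ≥ 0`. -/
theorem power_chordal_inequality (u v w θ : ℝ) (hw : 0 ≤ w) (hwv : w ≤ v)
    (n : ℕ) (hn : 0 < n) :
    (2 * ((u ^ 2 + v ^ 2) ^ n - (u ^ 2 + w ^ 2) ^ n) ≤
      ((u + v * Real.cos θ) ^ 2 + (v * Real.sin θ) ^ 2) ^ n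
        + ((u - v * Real.cos θ) ^ 2 + (v * Real.sin θ) ^ 2) ^ n
        - 2 * (u ^ 2 + w ^ 2) ^ n)
    ∧ 0 ≤ 2 * ((u ^ 2 + v ^ 2) ^ n - (u ^ 2 + w ^ 2) ^ n) := by
  set a := (u + v * Real.cos θ) ^ 2 + (v * Real.sin θ) ^ 2 with ha_def
  set b := (u - v * Real.cos θ) ^ 2 + (v * Real.sin θ) ^ 2 with hb_def
  have hpyt := Real.sin_sq_add_cos_sq θ
  have hmid : (1/2 : ℝ) * a + (1/2 : ℝ) * b = u ^ 2 + v ^ 2 := by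
    rw [ha_def, hb_def]; nlinarith [hpyt]
  have ha : (0:ℝ) ≤ a := by positivity
  have hb : (0:ℝ) ≤ b := by positivity
  have hconv := (convexOn_pow n).2 (Set.mem_Ici.mpr ha) (Set.mem_Ici.mpr hb)
    (by norm_num : (0:ℝ) ≤ 1/2) (by norm_num : (0:ℝ) ≤ 1/2) (by norm_num)
  simp only [smul_eq_mul, hmid] at hconv
  have h2 : (u ^ 2 + w ^ 2) ^ n ≤ (u ^ 2 + v ^ 2) ^ n := by
    apply pow_le_pow_left₀ (by positivity)
    nlinarith
  constructor
  · linarith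
  · linarith
end

section
/- Let C, D, E be unit vectors of a real inner product space with C + D ≠ 0, and let F := (C+D)/‖C+D‖. Then for every positive integer n, ‖C−E‖^{2n} + ‖D−E‖^{2n} ≥ ‖C−F‖^{2n} + ‖D−F‖^{2n}. -/
lemma two_mul_pow_le_aux (x y : ℝ) (hx : 0 ≤ x) (hy : 0 ≤ y) (n : ℕ) :
    2 * ((x + y) / 2) ^ n ≤ x ^ n + y ^ n := by
  have h := (convexOn_pow n).2 hx hy (by norm_num : (0:ℝ) ≤ 1/2)
    (by norm_num : (0:ℝ) ≤ 1/2) (by norm_num)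
  simp only [smul_eq_mul] at h
  have : (1/2 : ℝ) * x + 1/2 * y = (x + y) / 2 := by ring
  rw [this] at h
  linarith

/-- For unit vectors `C`, `D`, `E` with `C + D ≠ 0` and `F` the geodesic midpoint
of `C` and `D`, for every `n ≥ 1`,
`‖C−E‖^{2n} + ‖D−E‖^{2n} ≥ ‖C−F‖^{2n} + ‖D−F‖^{2n}`. -/
theorem chordal_power_midpoint_inequality
    {H : Type*} [NormedAddCommGroup H] [InnerProductSpace ℝ H]
    (C D E : H) (hC : ‖C‖ = 1) (hD : ‖D‖ = 1) (hE : ‖E‖ = 1)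
    (hCD : C + D ≠ 0)
    (F : H) (hF : F = ‖C + D‖⁻¹ • (C + D))
    (n : ℕ) (hn : 0 < n) :
    ‖C - F‖ ^ (2 * n) + ‖D - F‖ ^ (2 * n) ≤
      ‖C - E‖ ^ (2 * n) + ‖D - E‖ ^ (2 * n) := by
  set s : ℝ := ‖C + D‖ with hs
  have hs0 : 0 < s := norm_pos_iff.mpr hCD
  have hs2 : s ^ 2 = 2 + 2 * (inner ℝ C D : ℝ) := by
    rw [hs, @norm_add_sq_real, hC, hD]; ring
  have hsle2 : s ≤ 2 := by
    have h1 : (inner ℝ C D : ℝ) ≤ 1 := by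
      have := real_inner_le_norm C D
      rw [hC, hD] at this; linarith
    nlinarith
  have hF1 : ‖F‖ = 1 := by
    rw [hF, norm_smul, norm_inv, norm_norm]
    field_simp
  have hCF : (inner ℝ C F : ℝ) = s / 2 := by
    rw [hF, real_inner_smul_right, inner_add_right, real_inner_self_eq_norm_sq, hC]
    have : (1:ℝ)^2 + (inner ℝ C D : ℝ) = s^2 / 2 := by rw [hs2]; ring
    rw [this]
    field_simp
  have hDF : (inner ℝ D F : ℝ) = s / 2 := by
    rw [hF, real_inner_smul_right, inner_add_right, real_inner_self_eq_norm_sq, hD,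
      real_inner_comm]
    have : (inner ℝ C D : ℝ) + (1:ℝ)^2 = s^2 / 2 := by rw [hs2]; ring
    rw [this]
    field_simp
  have hCF2 : ‖C - F‖ ^ 2 = 2 - s := by
    rw [@norm_sub_sq_real, hC, hF1, hCF]; ring
  have hDF2 : ‖D - F‖ ^ 2 = 2 - s := by
    rw [@norm_sub_sq_real, hD, hF1, hDF]; ring
  set a : ℝ := ‖C - E‖ ^ 2 with ha
  set b : ℝ := ‖D - E‖ ^ 2 with hb
  have hab : 2 - s ≤ (a + b) / 2 := by
    have hCE : a = 2 - 2 * (inner ℝ C E : ℝ) := by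
      rw [ha, @norm_sub_sq_real, hC, hE]; ring
    have hDE : b = 2 - 2 * (inner ℝ D E : ℝ) := by
      rw [hb, @norm_sub_sq_real, hD, hE]; ring
    have hsum : (inner ℝ C E : ℝ) + (inner ℝ D E : ℝ) ≤ s := by
      have h := real_inner_le_norm (C + D) E
      rw [hE, inner_add_left] at h
      simpa using h
    rw [hCE, hDE]; linarith
  have hm0 : (0:ℝ) ≤ 2 - s := by
    have := sq_nonneg ‖C - F‖
    rw [hCF2] at this; linarith
  have ha0 : 0 ≤ a := sq_nonneg _
  have hb0 : 0 ≤ b := sq_nonneg _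
  calc ‖C - F‖ ^ (2 * n) + ‖D - F‖ ^ (2 * n)
      = 2 * (2 - s) ^ n := by
        rw [pow_mul, pow_mul, hCF2, hDF2]; ring
    _ ≤ 2 * ((a + b) / 2) ^ n := by
        have := pow_le_pow_left₀ hm0 hab n
        linarith
    _ ≤ a ^ n + b ^ n := two_mul_pow_le_aux a b ha0 hb0 n
    _ = ‖C - E‖ ^ (2 * n) + ‖D - E‖ ^ (2 * n) := by
        rw [pow_mul, pow_mul]
end

section
/- There exists τ > 0 with the following property. Let C, D, E be unit vectors of a real inner product space with arccos⟨C,D⟩ < τ, arccos⟨C,E⟩ < τ and arccos⟨D,E⟩ < τ, let F := (C+D)/‖C+D‖, and assume E ≠ F. Then (arccos⟨C,E⟩)² + (arccos⟨D,E⟩)² − ½·(arccos⟨C,D⟩)² > cos(arccos⟨C,D⟩/2)·(arccos⟨E,F⟩)². -/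
open Real
open scoped RealInnerProductSpace


/-- `cos x = 1 - 2 sin(x/2)^2`. -/
lemma my_cos_half (x : ℝ) : Real.cos x = 1 - 2 * Real.sin (x/2) ^ 2 := by
  have h2 := Real.cos_two_mul' (x/2)
  have h3 := Real.sin_sq_add_cos_sq (x/2)
  have h4 : 2 * (x/2) = x := by ring
  rw [h4] at h2
  linarith

/-- quartic upper bound for cosine on `[0,1]`. -/
lemma my_cos_upper {x : ℝ} (h0 : 0 ≤ x) (h1 : x ≤ 1) :
    Real.cos x ≤ 1 - x^2/2 + x^4/16 := by
  rcases eq_or_lt_of_le h0 with h | h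
  · simp [← h]
  · have hs : x/2 - (x/2)^3/4 < Real.sin (x/2) := by
      have := Real.sin_gt_sub_cube (by linarith : (0:ℝ) < x/2)
      nlinarith [pow_pos (by linarith : (0:ℝ) < x/2) 3]
    have hx2 : x^2 ≤ x := by nlinarith [mul_nonneg h.le (sub_nonneg.2 h1)]
    have hx3 : x^3 ≤ x := by nlinarith [mul_nonneg (mul_nonneg h.le h.le) (sub_nonneg.2 h1)]
    have hpos : 0 < x/2 - (x/2)^3/4 := by nlinarith
    have hsq : (x/2 - (x/2)^3/4)^2 < Real.sin (x/2)^2 :=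
      pow_lt_pow_left₀ hs hpos.le (by norm_num)
    have hch := my_cos_half x
    nlinarith [sq_nonneg (x^3), hsq]

/-- the polynomial core of the Pythagoras comparison. -/
lemma my_poly {m d : ℝ} (hm : m ≤ 1/2) (hd0 : 0 < d) (hdm : d ≤ m/2) :
    (1 - m^2/2 + m^4/16) * (m*d + d^4/16) ≤ (m - m^3/4) * (d - d^3/4) := by
  have hm0 : 0 < m := by linarith
  have hmd0 : (0:ℝ) ≤ m * d := by positivity
  have hA : d^2 ≤ m^2/4 := by nlinarith
  have hB : d^3 ≤ m^3/8 := by nlinarith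
  have hm2 : m^2 ≤ 1/4 := by nlinarith
  have h4 : m*d^3 ≤ m^3*d/4 := by nlinarith [mul_le_mul_of_nonneg_left hA hmd0]
  have h5 : m^5*d ≤ m^3*d/4 := by
    nlinarith [mul_le_mul_of_nonneg_left hm2 (by positivity : (0:ℝ) ≤ m^3*d)]
  have h6 : d^4 ≤ m^3*d/8 := by nlinarith [mul_le_mul_of_nonneg_left hB hd0.le]
  have h7 : m^4*d^4 ≤ m^3*d := by
    nlinarith [mul_le_mul_of_nonneg_left hB (by positivity : (0:ℝ) ≤ m^4*d),
      mul_le_mul_of_nonneg_left hm2 (by positivity : (0:ℝ) ≤ m^4*d^4)]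
  nlinarith [h4, h5, h6, h7, mul_pos hm0 hd0,
    mul_nonneg (mul_nonneg (mul_nonneg hm0.le hm0.le) hm0.le)
      (mul_nonneg (mul_nonneg hd0.le hd0.le) hd0.le),
    mul_nonneg (mul_nonneg hm0.le hm0.le)
      (mul_nonneg (mul_nonneg (mul_nonneg hd0.le hd0.le) hd0.le) hd0.le)]



lemma my_pos_cube {x : ℝ} (h0 : 0 < x) (h1 : x ≤ 1/2) : 0 < x - x^3/4 := by
  nlinarith [mul_pos h0 h0, mul_pos (mul_pos h0 h0) h0]

/-- spherical Pythagoras comparison for small legs. -/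
lemma my_pyth {m e : ℝ} (he : 0 ≤ e) (hem : e ≤ m) (hm : m ≤ 1/2) :
    Real.cos (Real.sqrt (m^2 + e^2)) ≤ Real.cos m * Real.cos e := by
  have hm0 : 0 ≤ m := le_trans he hem
  rcases eq_or_lt_of_le he with he0 | he0
  · rw [← he0]
    simp [Real.sqrt_sq hm0]
  · have hmpos : 0 < m := lt_of_lt_of_le he0 hem
    set s := Real.sqrt (m^2 + e^2) with hs
    have hs2 : s^2 = m^2 + e^2 := Real.sq_sqrt (by positivity)
    have hsm : m ≤ s := by
      have h := Real.sqrt_le_sqrt (by nlinarith : m^2 ≤ m^2 + e^2)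
      rwa [Real.sqrt_sq hm0] at h
    clear_value s
    obtain ⟨d, hd⟩ : ∃ d, s = m + d := ⟨s - m, by ring⟩
    subst hd
    have hd0 : 0 ≤ d := by linarith
    have hde : e^2 = 2*m*d + d^2 := by nlinarith [hs2]
    have hdpos : 0 < d := by
      rcases eq_or_lt_of_le hd0 with h | h
      · exfalso; nlinarith
      · exact h
    have hdm : d ≤ m/2 := by nlinarith [mul_self_le_mul_self he hem, mul_pos hmpos hmpos]
    rw [Real.cos_add]
    have hcd : Real.cos d ≤ 1 - d^2/2 + d^4/16 := my_cos_upper hd0 (by linarith)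
    have hce : 1 - e^2/2 ≤ Real.cos e := Real.one_sub_sq_div_two_le_cos
    have hcm : Real.cos m ≤ 1 - m^2/2 + m^4/16 := my_cos_upper hm0 (by linarith)
    have hcm0 : 0 < Real.cos m := Real.cos_pos_of_mem_Ioo
      ⟨by linarith [Real.pi_gt_three], by linarith [Real.pi_gt_three]⟩
    have hsm' : m - m^3/4 < Real.sin m := by
      have := Real.sin_gt_sub_cube hmpos; nlinarith [pow_pos hmpos 3]
    have hsd' : d - d^3/4 < Real.sin d := by
      have := Real.sin_gt_sub_cube hdpos; nlinarith [pow_pos hdpos 3]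
    have step0 : Real.cos d - Real.cos e ≤ m*d + d^4/16 := by linarith
    have hnn : (0:ℝ) ≤ m*d + d^4/16 := by positivity
    have step1 : Real.cos m * (Real.cos d - Real.cos e)
        ≤ (1 - m^2/2 + m^4/16) * (m*d + d^4/16) :=
      le_trans (mul_le_mul_of_nonneg_left step0 hcm0.le)
        (mul_le_mul_of_nonneg_right hcm hnn)
    have step2 := my_poly hm hdpos hdm
    have step3 : (m - m^3/4) * (d - d^3/4) ≤ Real.sin m * Real.sin d := by
      have h := mul_lt_mul'' hsm' hsd' (my_pos_cube hmpos hm).le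
        (my_pos_cube hdpos (by linarith)).le
      linarith
    have expand : Real.cos m * (Real.cos d - Real.cos e)
        = Real.cos m * Real.cos d - Real.cos m * Real.cos e := by ring
    linarith

lemma my_sin_sq_diff {a b : ℝ} (h0 : 0 ≤ a) (hab : a ≤ b) (hb : b ≤ 1) :
    Real.sin b ^ 2 - Real.sin a ^ 2 ≤ b^2 - a^2 := by
  have hpi : (3:ℝ) < π := Real.pi_gt_three
  have h1 : Real.sin b - Real.sin a ≤ b - a := by
    rw [Real.sin_sub_sin]
    have hs0 : 0 ≤ Real.sin ((b - a)/2) :=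
      Real.sin_nonneg_of_nonneg_of_le_pi (by linarith) (by linarith)
    have hs1 : Real.sin ((b - a)/2) ≤ (b - a)/2 := Real.sin_le (by linarith)
    have hc1 : Real.cos ((b + a)/2) ≤ 1 := Real.cos_le_one _
    nlinarith
  have h2 : Real.sin b + Real.sin a ≤ b + a := by
    have := Real.sin_le h0
    have := Real.sin_le (le_trans h0 hab)
    linarith
  have h3 : 0 ≤ Real.sin b + Real.sin a := by
    have := Real.sin_nonneg_of_nonneg_of_le_pi h0 (by linarith)
    have := Real.sin_nonneg_of_nonneg_of_le_pi (le_trans h0 hab) (by linarith)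
    linarith
  have k1 : (Real.sin b - Real.sin a) * (Real.sin b + Real.sin a)
      ≤ (b - a) * (Real.sin b + Real.sin a) := mul_le_mul_of_nonneg_right h1 h3
  have k2 : (b - a) * (Real.sin b + Real.sin a) ≤ (b - a) * (b + a) :=
    mul_le_mul_of_nonneg_left h2 (by linarith)
  nlinarith [k1, k2]

lemma my_sin_half_sq {g : ℝ} (h0 : 0 < g) (h1 : g ≤ 1/2) :
    g^2 < 8 * Real.sin (g/2) ^ 2 := by
  have hs : g/2 - (g/2)^3/4 < Real.sin (g/2) := by
    have := Real.sin_gt_sub_cube (by linarith : (0:ℝ) < g/2)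
    nlinarith [pow_pos (by linarith : (0:ℝ) < g/2) 3]
  have hg2 : g^2 ≤ 1/4 := by nlinarith
  have hg3 : g*g^2 ≤ g/4 := by nlinarith [mul_le_mul_of_nonneg_left hg2 h0.le]
  have hpos : 0 < g/2 - (g/2)^3/4 := by nlinarith
  have hsq : (g/2 - (g/2)^3/4)^2 < Real.sin (g/2)^2 :=
    pow_lt_pow_left₀ hs hpos.le (by norm_num)
  nlinarith [hsq, hg2, mul_pos h0 h0, sq_nonneg (g^3),
    mul_le_mul_of_nonneg_left hg2 (sq_nonneg g)]

set_option maxHeartbeats 4000000 in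
/-- Half of inequality (70) in Appendix C (curvature `K = 1`): writing
`b = d(C,D)`, `c = d(D,E)`, `f = d(C,E)`, `g = d(E,F)` for geodesic distances on
the unit sphere and `F` for the geodesic midpoint of `C` and `D`, one has
`c² + f² − b²/2 > cos(b/2)·g²` in a sufficiently small geodesic ball when `E ≠ F`. -/
theorem geodesic_half_inequality :
    ∃ τ : ℝ, 0 < τ ∧
      ∀ (H : Type*) [NormedAddCommGroup H] [InnerProductSpace ℝ H]
        (C D E : H), ‖C‖ = 1 → ‖D‖ = 1 → ‖E‖ = 1 →
        Real.arccos ⟪C, D⟫ < τ → Real.arccos ⟪C, E⟫ < τ →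
        Real.arccos ⟪D, E⟫ < τ →
        ∀ F : H, F = ‖C + D‖⁻¹ • (C + D) → E ≠ F →
        Real.cos (Real.arccos ⟪C, D⟫ / 2) * Real.arccos ⟪E, F⟫ ^ 2 <
          Real.arccos ⟪C, E⟫ ^ 2 + Real.arccos ⟪D, E⟫ ^ 2
            - (1 / 2) * Real.arccos ⟪C, D⟫ ^ 2 := by
  refine ⟨1/2, by norm_num, ?_⟩
  intro H _ _ C D E hC hD hE hbτ hfτ hcτ F hF hEF
  have hpi : (3:ℝ) < π := Real.pi_gt_three
  subst hF
  -- inner products are in [-1, 1]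
  have hCD : |⟪C, D⟫| ≤ 1 := by
    have := abs_real_inner_le_norm C D
    rwa [hC, hD, one_mul] at this
  have hCE : |⟪C, E⟫| ≤ 1 := by
    have := abs_real_inner_le_norm C E
    rwa [hC, hE, one_mul] at this
  have hDE : |⟪D, E⟫| ≤ 1 := by
    have := abs_real_inner_le_norm D E
    rwa [hD, hE, one_mul] at this
  set b := Real.arccos ⟪C, D⟫ with hbdef
  set f := Real.arccos ⟪C, E⟫ with hfdef
  set c := Real.arccos ⟪D, E⟫ with hcdef
  have hb0 : 0 ≤ b := Real.arccos_nonneg _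
  have hf0 : 0 ≤ f := Real.arccos_nonneg _
  have hc0 : 0 ≤ c := Real.arccos_nonneg _
  have hbπ : b ≤ π := Real.arccos_le_pi _
  have hfπ : f ≤ π := Real.arccos_le_pi _
  have hcπ : c ≤ π := Real.arccos_le_pi _
  have hcosb : Real.cos b = ⟪C, D⟫ := Real.cos_arccos (abs_le.mp hCD).1 (abs_le.mp hCD).2
  have hcosf : Real.cos f = ⟪C, E⟫ := Real.cos_arccos (abs_le.mp hCE).1 (abs_le.mp hCE).2
  have hcosc : Real.cos c = ⟪D, E⟫ := Real.cos_arccos (abs_le.mp hDE).1 (abs_le.mp hDE).2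
  clear_value b f c
  -- h = cos(b/2)
  have hh0 : 0 < Real.cos (b/2) := Real.cos_pos_of_mem_Ioo ⟨by linarith, by linarith⟩
  have hh1 : Real.cos (b/2) ≤ 1 := Real.cos_le_one _
  -- norm of C + D
  have hcb2 : Real.cos b = 2 * Real.cos (b/2)^2 - 1 := by
    have h2mul := Real.cos_two_mul (b/2)
    have h2 : 2 * (b/2) = b := by ring
    rw [h2] at h2mul
    linarith
  have hnorm : ‖C + D‖ = 2 * Real.cos (b/2) := by
    have h1 : ‖C + D‖^2 = 2 + 2 * ⟪C, D⟫ := by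
      rw [norm_add_sq_real, hC, hD]; ring
    have h2 : ‖C + D‖^2 = (2 * Real.cos (b/2))^2 := by
      rw [h1, ← hcosb, hcb2]; ring
    calc ‖C + D‖ = Real.sqrt (‖C + D‖^2) := (Real.sqrt_sq (norm_nonneg _)).symm
      _ = Real.sqrt ((2 * Real.cos (b/2))^2) := by rw [h2]
      _ = 2 * Real.cos (b/2) := Real.sqrt_sq (by linarith)
  have hnpos : (0:ℝ) < 2 * Real.cos (b/2) := by linarith
  have hFnorm : ‖‖C + D‖⁻¹ • (C + D)‖ = 1 := by
    rw [norm_smul, norm_inv, norm_norm, hnorm]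
    field_simp
  -- the inner product with F
  have hEC : ⟪E, C⟫ = Real.cos f := by rw [real_inner_comm]; exact hcosf.symm
  have hED : ⟪E, D⟫ = Real.cos c := by rw [real_inner_comm]; exact hcosc.symm
  have hEFinner : ⟪E, ‖C + D‖⁻¹ • (C + D)⟫
      = (2 * Real.cos (b/2))⁻¹ * (Real.cos f + Real.cos c) := by
    rw [real_inner_smul_right, inner_add_right, hnorm, hEC, hED]
  have hEF1 : |⟪E, ‖C + D‖⁻¹ • (C + D)⟫| ≤ 1 := by
    have := abs_real_inner_le_norm E (‖C + D‖⁻¹ • (C + D))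
    rwa [hE, hFnorm, one_mul] at this
  set g := Real.arccos ⟪E, ‖C + D‖⁻¹ • (C + D)⟫ with hgdef
  have hg0 : 0 ≤ g := Real.arccos_nonneg _
  have hgπ : g ≤ π := Real.arccos_le_pi _
  have hcosg : Real.cos g = ⟪E, ‖C + D‖⁻¹ • (C + D)⟫ :=
    Real.cos_arccos (abs_le.mp hEF1).1 (abs_le.mp hEF1).2
  -- g is positive
  have hgpos : 0 < g := by
    rcases eq_or_lt_of_le hg0 with h | h
    · exfalso
      apply hEF
      have h1 : (1:ℝ) ≤ ⟪E, ‖C + D‖⁻¹ • (C + D)⟫ := Real.arccos_eq_zero.mp h.symm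
      have h2 : ⟪E, ‖C + D‖⁻¹ • (C + D)⟫ = 1 := le_antisymm (abs_le.mp hEF1).2 h1
      exact (inner_eq_one_iff_of_norm_eq_one hE hFnorm).mp h2
    · exact h
  have key : 2 * Real.cos (b/2) * Real.cos g = Real.cos f + Real.cos c := by
    rw [hcosg, hEFinner]
    field_simp
  clear_value g
  clear hcosg hEFinner hEF1 hEC hED hFnorm hnorm hcosb hcosf hcosc hCD hCE hDE hEF hcb2
  clear hC hD hE
  clear hbdef hfdef hcdef hgdef
  -- g < 1/2
  have hcoshalf : Real.cos (1/2) < Real.cos f :=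
    Real.strictAntiOn_cos ⟨hf0, hfπ⟩ ⟨by norm_num, by linarith⟩ hfτ
  have hcoshalfc : Real.cos (1/2) < Real.cos c :=
    Real.strictAntiOn_cos ⟨hc0, hcπ⟩ ⟨by norm_num, by linarith⟩ hcτ
  have hcoshalfpos : 0 < Real.cos (1/2) := Real.cos_pos_of_mem_Ioo ⟨by linarith, by linarith⟩
  have hcosgpos : 0 < Real.cos g := by
    by_contra hcon
    push_neg at hcon
    have h2 := mul_nonneg hnpos.le (neg_nonneg.mpr hcon)
    have h3 : (2 * Real.cos (b/2)) * -Real.cos g = -(2 * Real.cos (b/2) * Real.cos g) := by ring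
    rw [h3] at h2
    linarith [key]
  have hgcos : Real.cos (1/2) < Real.cos g := by
    have h4 := mul_le_mul_of_nonneg_right hh1 hcosgpos.le
    rw [one_mul] at h4
    linarith [key, h4]
  have hghalf : g < 1/2 := by
    by_contra hcon
    push_neg at hcon
    rcases eq_or_lt_of_le hcon with h | h
    · rw [← h] at hgcos; linarith
    · have := Real.strictAntiOn_cos ⟨by norm_num, by linarith⟩ ⟨hg0, hgπ⟩ h
      linarith
  -- half-angle identities
  have ef := my_cos_half f
  have ec := my_cos_half c
  have eg := my_cos_half g
  have ew := my_cos_half (b/2)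
  -- step A: spherical Pythagoras comparison
  have he0 : (0:ℝ) ≤ |f - c| / 2 := by positivity
  have habs : |f - c| ≤ f + c := abs_le.mpr ⟨by linarith, by linarith⟩
  have hem : |f - c| / 2 ≤ (f + c) / 2 := by linarith
  have hm12 : (f + c) / 2 ≤ 1/2 := by linarith
  have pyth := my_pyth he0 hem hm12
  have hsum2 : ((f + c)/2)^2 + (|f - c|/2)^2 = (f^2 + c^2)/2 := by
    rw [div_pow, div_pow, sq_abs]; ring
  have hcose : Real.cos (|f - c|/2) = Real.cos ((f - c)/2) := by
    rw [show |f - c|/2 = |(f - c)/2| by rw [abs_div]; norm_num, Real.cos_abs]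
  have hprod : Real.cos f + Real.cos c = 2 * Real.cos ((f + c)/2) * Real.cos (|f - c|/2) := by
    rw [Real.cos_add_cos, hcose]
  rw [hsum2] at pyth
  -- σ = sqrt((f² + c²)/2)
  have hf14 : f * f ≤ (1/2) * (1/2) := mul_self_le_mul_self hf0 hfτ.le
  have hc14 : c * c ≤ (1/2) * (1/2) := mul_self_le_mul_self hc0 hcτ.le
  have hfc14 : (f^2 + c^2)/2 ≤ 1/4 := by nlinarith [hf14, hc14]
  obtain ⟨σ, hσdef⟩ : ∃ x : ℝ, x = Real.sqrt ((f^2 + c^2)/2) := ⟨_, rfl⟩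
  have hσ0 : 0 ≤ σ := by rw [hσdef]; exact Real.sqrt_nonneg _
  have hσ2 : σ^2 = (f^2 + c^2)/2 := by
    rw [hσdef]; exact Real.sq_sqrt (by positivity)
  have hσhalf : σ ≤ 1/2 := by
    rw [hσdef]
    have h2 := Real.sqrt_le_sqrt hfc14
    rwa [show (1/4:ℝ) = (1/2)^2 by norm_num, Real.sqrt_sq (by norm_num : (0:ℝ) ≤ 1/2)] at h2
  rw [← hσdef] at pyth
  have keyσ : Real.cos σ ≤ Real.cos (b/2) * Real.cos g := by linarith [pyth, hprod, key]
  -- translate to half-sines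
  have eσ := my_cos_half σ
  have heg : Real.cos (b/2) * Real.cos g
      = Real.cos (b/2) - 2 * Real.cos (b/2) * Real.sin (g/2)^2 := by
    linear_combination Real.cos (b/2) * eg
  have hsinσ : Real.sin (b/2/2)^2 + Real.cos (b/2) * Real.sin (g/2)^2 ≤ Real.sin (σ/2)^2 := by
    linarith [keyσ, eσ, heg, ew]
  -- step B
  have hw0 : 0 ≤ b/2/2 := by linarith
  have hsinw : 0 ≤ Real.sin (b/2/2) := Real.sin_nonneg_of_nonneg_of_le_pi hw0 (by linarith)
  have hsinσ0 : 0 ≤ Real.sin (σ/2) := Real.sin_nonneg_of_nonneg_of_le_pi (by linarith) (by linarith)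
  have hsgpos : 0 < Real.sin (g/2) := Real.sin_pos_of_pos_of_lt_pi (by linarith) (by linarith)
  have hsgsq : 0 < Real.cos (b/2) * Real.sin (g/2)^2 := mul_pos hh0 (pow_pos hsgpos 2)
  have hwσ : b/2/2 ≤ σ/2 := by
    by_contra hcon
    push_neg at hcon
    have hmono := Real.strictMonoOn_sin
      (a := σ/2) (b := b/2/2) ⟨by linarith, by linarith⟩ ⟨by linarith, by linarith⟩ hcon
    have hsq := pow_lt_pow_left₀ hmono hsinσ0 (n := 2) (by norm_num)
    linarith
  have hdiff := my_sin_sq_diff hw0 hwσ (by linarith : σ/2 ≤ 1)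
  have lower : Real.cos (b/2) * Real.sin (g/2)^2 ≤ (σ/2)^2 - (b/2/2)^2 := by
    linarith [hsinσ, hdiff]
  -- step C and conclusion
  have stepC := my_sin_half_sq hgpos hghalf.le
  have h1 : Real.cos (b/2) * g^2 < Real.cos (b/2) * (8 * Real.sin (g/2)^2) :=
    mul_lt_mul_of_pos_left stepC hh0
  have hσexp : 8 * ((σ/2)^2 - (b/2/2)^2) = f^2 + c^2 - (1/2) * b^2 := by
    have h3 : (σ/2)^2 = σ^2/4 := by ring
    rw [h3, hσ2]; ring
  linarith [h1, lower, hσexp]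
end

section
/- There exists τ > 0 with the following property. Let A, D, C, B be unit vectors in ℝ³ whose pairwise angles arccos⟨·,·⟩ are all less than τ, set E := (A+B)/‖A+B‖ and F := (C+D)/‖C+D‖, assume E ≠ F, and write d(u,v) := arccos⟨u,v⟩. Then d(D,E)² + d(A,F)² + d(B,F)² + d(C,E)² − ½·(d(A,B)² + d(C,D)²) > (cos(d(A,B)/2) + cos(d(C,D)/2))·d(E,F)². -/
open Real
open scoped RealInnerProductSpace

set_option maxHeartbeats 1000000

private lemma sin_ratio_le {x y : ℝ} (hx : 0 ≤ x) (hxy : x ≤ y) (hy : y ≤ π) :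
    x * Real.sin y ≤ y * Real.sin x := by
  rcases eq_or_lt_of_le hx with h | hx0
  · simp [← h]
  · have hy0 : 0 < y := lt_of_lt_of_le hx0 hxy
    have hmem1 : y ∈ Set.Icc (0:ℝ) π := ⟨hy0.le, hy⟩
    have hmem2 : (0:ℝ) ∈ Set.Icc (0:ℝ) π := ⟨le_rfl, Real.pi_pos.le⟩
    have ha : (0:ℝ) ≤ x / y := by positivity
    have hb : (0:ℝ) ≤ 1 - x / y := by
      rw [sub_nonneg, div_le_one hy0]; exact hxy
    have hsum : x / y + (1 - x / y) = 1 := by ring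
    have hconc := strictConcaveOn_sin_Icc.concaveOn.2 hmem1 hmem2 ha hb hsum
    simp only [smul_eq_mul, Real.sin_zero, mul_zero, add_zero] at hconc
    have hxy' : x / y * y = x := div_mul_cancel₀ x hy0.ne'
    rw [hxy'] at hconc
    calc x * Real.sin y = (x / y * Real.sin y) * y := by field_simp
      _ ≤ Real.sin x * y := by
          apply mul_le_mul_of_nonneg_right hconc hy0.le
      _ = y * Real.sin x := by ring

private lemma tangent_lemma {t0 t : ℝ} (h1 : 0 < t0) (h2 : t0 < π) (h3 : 0 ≤ t) (h4 : t ≤ π) :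
    t0 ^ 2 + 2 * t0 / Real.sin t0 * (Real.cos t0 - Real.cos t) ≤ t ^ 2 := by
  have hs0 : 0 < Real.sin t0 := Real.sin_pos_of_pos_of_lt_pi h1 h2
  set c := t0 / Real.sin t0 with hc
  have hcpos : 0 < c := div_pos h1 hs0
  set f : ℝ → ℝ := fun y => y ^ 2 + 2 * c * Real.cos y with hf
  have hderiv : ∀ x : ℝ, HasDerivAt f (2 * x - 2 * c * Real.sin x) x := by
    intro x
    have hp : HasDerivAt (fun y : ℝ => y ^ 2) (2 * x) x := by
      simpa using hasDerivAt_pow 2 x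
    have hcs : HasDerivAt (fun y : ℝ => 2 * c * Real.cos y) (2 * c * (-Real.sin x)) x :=
      (Real.hasDerivAt_cos x).const_mul (2 * c)
    have := hp.add hcs
    exact this.congr_deriv (by ring)
  have hcont : Continuous f := by
    apply Continuous.add (continuous_pow 2)
    exact continuous_const.mul Real.continuous_cos
  have key : f t0 ≤ f t := by
    rcases le_total t0 t with hle | hle
    · have hmono : MonotoneOn f (Set.Icc t0 π) := by
        apply monotoneOn_of_deriv_nonneg (convex_Icc t0 π) hcont.continuousOn
        · intro x _; exact (hderiv x).differentiableAt.differentiableWithinAt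
        · intro x hx
          rw [interior_Icc] at hx
          rw [(hderiv x).deriv]
          have hratio := sin_ratio_le h1.le hx.1.le hx.2.le
          have : c * Real.sin x ≤ x := by
            rw [hc, div_mul_eq_mul_div, div_le_iff₀ hs0]
            linarith
          linarith
      exact hmono ⟨le_rfl, h2.le⟩ ⟨hle, h4⟩ hle
    · have hanti : AntitoneOn f (Set.Icc 0 t0) := by
        apply antitoneOn_of_deriv_nonpos (convex_Icc 0 t0) hcont.continuousOn
        · intro x _; exact (hderiv x).differentiableAt.differentiableWithinAt
        · intro x hx
          rw [interior_Icc] at hx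
          rw [(hderiv x).deriv]
          have hratio := sin_ratio_le hx.1.le hx.2.le h2.le
          have : x ≤ c * Real.sin x := by
            rw [hc, div_mul_eq_mul_div, le_div_iff₀ hs0]
            linarith
          linarith
      exact hanti ⟨h3, hle⟩ ⟨h1.le, le_rfl⟩ hle
  have hexp : f t0 = t0 ^ 2 + 2 * c * Real.cos t0 := rfl
  have hexp2 : f t = t ^ 2 + 2 * c * Real.cos t := rfl
  have h2c : 2 * t0 / Real.sin t0 = 2 * c := by rw [hc]; ring
  rw [h2c]
  rw [hexp, hexp2] at key
  linarith

private lemma pair_bound {a d e t : ℝ} (ha0 : 0 ≤ a) (ha : a < 1)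
    (hd0 : 0 ≤ d) (hd1 : d ≤ π) (he0 : 0 ≤ e) (he1 : e ≤ π) (ht : t ≤ 1)
    (hsum : Real.cos d + Real.cos e = 2 * Real.cos (a / 2) * t) :
    a ^ 2 / 2 + 4 * Real.cos (a / 2) * (1 - t) ≤ d ^ 2 + e ^ 2 := by
  rcases eq_or_lt_of_le ha0 with h0 | h0
  · have ha' : a = 0 := h0.symm
    subst ha'
    simp only [zero_div, Real.cos_zero, mul_one] at hsum ⊢
    have hd' := Real.one_sub_sq_div_two_le_cos (x := d)
    have he' := Real.one_sub_sq_div_two_le_cos (x := e)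
    nlinarith
  · have hpi : (3:ℝ) < π := Real.pi_gt_three
    have hα0 : 0 < a / 2 := by linarith
    have hαπ : a / 2 < π := by linarith
    have hs0 : 0 < Real.sin (a / 2) := Real.sin_pos_of_pos_of_lt_pi hα0 hαπ
    have hsle : Real.sin (a / 2) ≤ a / 2 := Real.sin_le hα0.le
    have hcp : 0 < Real.cos (a / 2) :=
      Real.cos_pos_of_mem_Ioo ⟨by linarith, by linarith⟩
    have H1 := tangent_lemma hα0 hαπ hd0 hd1
    have H2 := tangent_lemma hα0 hαπ he0 he1
    set p := Real.cos (a / 2) with hp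
    set s := Real.sin (a / 2) with hs
    -- sum of tangent bounds
    have Hsum : 2 * (a / 2) ^ 2 + 2 * (a / 2) / s * (2 * p - (Real.cos d + Real.cos e))
        ≤ d ^ 2 + e ^ 2 := by
      have : 2 * (a / 2) / s * (2 * p - (Real.cos d + Real.cos e)) =
          2 * (a / 2) / s * (p - Real.cos d) + 2 * (a / 2) / s * (p - Real.cos e) := by ring
      rw [this]
      linarith
    rw [hsum] at Hsum
    have hcoef : 4 * p * (1 - t) ≤ 2 * (a / 2) / s * (2 * p - 2 * p * t) := by
      have heq : 2 * (a / 2) / s * (2 * p - 2 * p * t) = (2 * p * (1 - t)) * (a / s) := by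
        ring
      rw [heq]
      have h1t : 0 ≤ 1 - t := by linarith
      have has : 2 ≤ a / s := by
        rw [le_div_iff₀ hs0]; linarith
      have hfac : 0 ≤ 2 * p * (1 - t) := by positivity
      nlinarith
    nlinarith

private lemma tlow_aux {p q t S c : ℝ} (hp : 0 < p) (hq : 0 < q) (hp1 : p ≤ 1)
    (hq1 : q ≤ 1) (hc : 0 < c) (hS : 4 * c < S) (he : t * (4 * p * q) = S) : c < t := by
  have hpq : 0 < p * q := mul_pos hp hq
  have hpq1 : p * q ≤ 1 := by nlinarith
  have ht0 : 0 < t := by nlinarith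
  nlinarith

private lemma gkey_aux {g t : ℝ} (hg0 : 0 < g) (hg1 : g < 1)
    (hb' : t ≤ 1 - g ^ 2 / 2 + g ^ 4 * (5 / 96)) : g ^ 2 < 4 * (1 - t) := by
  have hg2 : g ^ 2 < 1 := by nlinarith
  have hg2pos : 0 < g ^ 2 := pow_pos hg0 2
  have hg4 : g ^ 4 ≤ g ^ 2 := by
    nlinarith [mul_nonneg hg2pos.le (by linarith : (0:ℝ) ≤ 1 - g ^ 2)]
  linarith

private lemma final_aux {p q g t : ℝ} (hp : 0 < p) (hq : 0 < q)
    (hk : g ^ 2 < 4 * (1 - t)) :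
    (p + q) * g ^ 2 < 4 * p * (1 - t) + 4 * q * (1 - t) := by
  nlinarith [mul_pos (by linarith : (0:ℝ) < p + q)
    (by linarith : (0:ℝ) < 4 * (1 - t) - g ^ 2)]

/-- Inequality (70) in Appendix C (curvature `K = 1`): for an ordered quadruple
`{A,D,C,B}` of unit vectors of `ℝ³` in a small geodesic ball, with `E`, `F` the
geodesic midpoints of the arcs `AB` and `CD` and `E ≠ F`, writing
`d(u,v) = arccos⟪u,v⟫`,
`d(D,E)² + d(A,F)² + d(B,F)² + d(C,E)² − ½(d(A,B)² + d(C,D)²)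
  > (cos(d(A,B)/2) + cos(d(C,D)/2))·d(E,F)²`. -/
theorem geodesic_midpoint_inequality :
    ∃ τ : ℝ, 0 < τ ∧
      ∀ A D C B : EuclideanSpace ℝ (Fin 3),
        ‖A‖ = 1 → ‖D‖ = 1 → ‖C‖ = 1 → ‖B‖ = 1 →
        Real.arccos ⟪A, D⟫ < τ → Real.arccos ⟪A, C⟫ < τ →
        Real.arccos ⟪A, B⟫ < τ → Real.arccos ⟪D, C⟫ < τ →
        Real.arccos ⟪D, B⟫ < τ → Real.arccos ⟪C, B⟫ < τ →
        ∀ E F : EuclideanSpace ℝ (Fin 3),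
          E = ‖A + B‖⁻¹ • (A + B) → F = ‖C + D‖⁻¹ • (C + D) → E ≠ F →
          (Real.cos (Real.arccos ⟪A, B⟫ / 2) + Real.cos (Real.arccos ⟪C, D⟫ / 2))
              * Real.arccos ⟪E, F⟫ ^ 2 <
            Real.arccos ⟪D, E⟫ ^ 2 + Real.arccos ⟪A, F⟫ ^ 2
              + Real.arccos ⟪B, F⟫ ^ 2 + Real.arccos ⟪C, E⟫ ^ 2
              - (1 / 2) * (Real.arccos ⟪A, B⟫ ^ 2 + Real.arccos ⟪C, D⟫ ^ 2) := by
  classical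
  refine ⟨1, one_pos, ?_⟩
  intro A D C B hA hD hC hB hAD hAC hAB hDC hDB hCB E F hE hF hEF
  have hpi : (3:ℝ) < π := Real.pi_gt_three
  -- inner products of unit vectors lie in [-1, 1]
  have unit_inner : ∀ X Y : EuclideanSpace ℝ (Fin 3), ‖X‖ = 1 → ‖Y‖ = 1 →
      -1 ≤ ⟪X, Y⟫ ∧ ⟪X, Y⟫ ≤ 1 := by
    intro X Y hX hY
    have := abs_real_inner_le_norm X Y
    rw [hX, hY, mul_one] at this
    exact abs_le.mp this
  -- norm of sum of unit vectors
  have norm_add_unit : ∀ X Y : EuclideanSpace ℝ (Fin 3), ‖X‖ = 1 → ‖Y‖ = 1 →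
      ‖X + Y‖ = 2 * Real.cos (Real.arccos ⟪X, Y⟫ / 2) := by
    intro X Y hX hY
    obtain ⟨hl, hr⟩ := unit_inner X Y hX hY
    have hnorm : ‖X + Y‖ ^ 2 = ‖X‖ ^ 2 + 2 * ⟪X, Y⟫ + ‖Y‖ ^ 2 := norm_add_sq_real X Y
    have hnn : (0:ℝ) ≤ ‖X + Y‖ := norm_nonneg _
    rw [hX, hY] at hnorm
    obtain ⟨r, hr_def⟩ : ∃ r : ℝ, ⟪X, Y⟫ = r := ⟨_, rfl⟩
    obtain ⟨n, hn_def⟩ : ∃ n : ℝ, ‖X + Y‖ = n := ⟨_, rfl⟩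
    rw [hr_def] at hl hr hnorm
    rw [hn_def] at hnorm hnn ⊢
    rw [hr_def]
    have hc : Real.cos (Real.arccos r) = r := Real.cos_arccos hl hr
    have hcsq := Real.cos_sq (Real.arccos r / 2)
    rw [mul_div_cancel₀ _ (two_ne_zero' ℝ)] at hcsq
    have hpos : 0 ≤ Real.cos (Real.arccos r / 2) :=
      Real.cos_nonneg_of_mem_Icc
        ⟨by linarith [Real.arccos_nonneg r, Real.pi_pos],
         by linarith [Real.arccos_le_pi r]⟩
    have h0 : (n - 2 * Real.cos (Real.arccos r / 2))
        * (n + 2 * Real.cos (Real.arccos r / 2)) = 0 := by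
      linear_combination hnorm - 4 * hcsq - 2 * hc
    rcases mul_eq_zero.mp h0 with h | h
    · linarith
    · linarith
  -- vector-level facts
  obtain ⟨hABl, hABr⟩ := unit_inner A B hA hB
  obtain ⟨hCDl, hCDr⟩ := unit_inner C D hC hD
  have hnAB : ‖A + B‖ = 2 * Real.cos (Real.arccos ⟪A, B⟫ / 2) := norm_add_unit A B hA hB
  have hnCD : ‖C + D‖ = 2 * Real.cos (Real.arccos ⟪C, D⟫ / 2) := norm_add_unit C D hC hD
  have hb_lt : Real.arccos ⟪C, D⟫ < 1 := by rwa [real_inner_comm] at hDC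
  have hp_pos : 0 < Real.cos (Real.arccos ⟪A, B⟫ / 2) :=
    Real.cos_pos_of_mem_Ioo
      ⟨by linarith [Real.arccos_nonneg ⟪A, B⟫], by linarith [hAB]⟩
  have hq_pos : 0 < Real.cos (Real.arccos ⟪C, D⟫ / 2) :=
    Real.cos_pos_of_mem_Ioo
      ⟨by linarith [Real.arccos_nonneg ⟪C, D⟫], by linarith [hb_lt]⟩
  have hnABpos : (0:ℝ) < ‖A + B‖ := by rw [hnAB]; linarith
  have hnCDpos : (0:ℝ) < ‖C + D‖ := by rw [hnCD]; linarith
  have hEunit : ‖E‖ = 1 := by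
    rw [hE, norm_smul, norm_inv, norm_norm, inv_mul_cancel₀ hnABpos.ne']
  have hFunit : ‖F‖ = 1 := by
    rw [hF, norm_smul, norm_inv, norm_norm, inv_mul_cancel₀ hnCDpos.ne']
  obtain ⟨htm1, ht1⟩ := unit_inner E F hEunit hFunit
  have hABE : A + B = ‖A + B‖ • E := by
    rw [hE, smul_smul, mul_inv_cancel₀ hnABpos.ne', one_smul]
  have hCDF : C + D = ‖C + D‖ • F := by
    rw [hF, smul_smul, mul_inv_cancel₀ hnCDpos.ne', one_smul]
  have hsum1 : ⟪A, F⟫ + ⟪B, F⟫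
      = 2 * Real.cos (Real.arccos ⟪A, B⟫ / 2) * ⟪E, F⟫ := by
    have h1 : ⟪A, F⟫ + ⟪B, F⟫ = ⟪A + B, F⟫ := (inner_add_left A B F).symm
    rw [h1, hABE, real_inner_smul_left, hnAB]
  have hsum2 : ⟪D, E⟫ + ⟪C, E⟫
      = 2 * Real.cos (Real.arccos ⟪C, D⟫ / 2) * ⟪E, F⟫ := by
    have h1 : ⟪D, E⟫ + ⟪C, E⟫ = ⟪C + D, E⟫ := by
      rw [inner_add_left]; ring
    rw [h1, hCDF, real_inner_smul_left, hnCD, real_inner_comm E F]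
  have hcos1pos : 0 < Real.cos 1 :=
    Real.cos_pos_of_mem_Ioo ⟨by linarith, by linarith⟩
  have inner_gt : ∀ X Y : EuclideanSpace ℝ (Fin 3), ‖X‖ = 1 → ‖Y‖ = 1 →
      Real.arccos ⟪X, Y⟫ < 1 → Real.cos 1 < ⟪X, Y⟫ := by
    intro X Y hX hY h
    obtain ⟨hl, hr⟩ := unit_inner X Y hX hY
    have := Real.cos_lt_cos_of_nonneg_of_le_pi (Real.arccos_nonneg ⟪X, Y⟫)
      (by linarith) h
    rwa [Real.cos_arccos hl hr] at this
  have hgtAC := inner_gt A C hA hC hAC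
  have hgtAD := inner_gt A D hA hD hAD
  have hgtBD : Real.cos 1 < ⟪B, D⟫ := by
    rw [real_inner_comm]; exact inner_gt D B hD hB hDB
  have hgtBC : Real.cos 1 < ⟪B, C⟫ := by
    rw [real_inner_comm]; exact inner_gt C B hC hB hCB
  have htexp : ⟪E, F⟫ * (4 * Real.cos (Real.arccos ⟪A, B⟫ / 2)
      * Real.cos (Real.arccos ⟪C, D⟫ / 2)) = ⟪A, C⟫ + ⟪A, D⟫ + ⟪B, C⟫ + ⟪B, D⟫ := by
    have hEF' : ⟪E, F⟫ = ‖A + B‖⁻¹ * (‖C + D‖⁻¹ * ⟪A + B, C + D⟫) := by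
      rw [hE, hF, real_inner_smul_left, real_inner_smul_right]
    have hexpand : ⟪A + B, C + D⟫ = ⟪A, C⟫ + ⟪A, D⟫ + ⟪B, C⟫ + ⟪B, D⟫ := by
      rw [inner_add_left, inner_add_right, inner_add_right]; ring
    rw [hEF', hexpand, hnAB, hnCD]
    obtain ⟨P, hP⟩ : ∃ P, Real.cos (Real.arccos ⟪A, B⟫ / 2) = P := ⟨_, rfl⟩
    obtain ⟨Q, hQ⟩ : ∃ Q, Real.cos (Real.arccos ⟪C, D⟫ / 2) = Q := ⟨_, rfl⟩
    obtain ⟨S, hS⟩ : ∃ S : ℝ, (⟪A, C⟫ + ⟪A, D⟫ + ⟪B, C⟫ + ⟪B, D⟫ : ℝ) = S := ⟨_, rfl⟩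
    rw [hP, hQ, hS]
    have hP0 : P ≠ 0 := by rw [← hP]; exact hp_pos.ne'
    have hQ0 : Q ≠ 0 := by rw [← hQ]; exact hq_pos.ne'
    field_simp
    ring
  have htEF1 : ⟪E, F⟫ < 1 :=
    lt_of_le_of_ne ht1 fun h => hEF ((inner_eq_one_iff_of_norm_eq_one hEunit hFunit).mp h)
  -- bounds for the four distances
  obtain ⟨hAFl, hAFr⟩ := unit_inner A F hA hFunit
  obtain ⟨hBFl, hBFr⟩ := unit_inner B F hB hFunit
  obtain ⟨hDEl, hDEr⟩ := unit_inner D E hD hEunit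
  obtain ⟨hCEl, hCEr⟩ := unit_inner C E hC hEunit
  -- now pass to scalar quantities
  set a := Real.arccos ⟪A, B⟫ with ha_def
  set b := Real.arccos ⟪C, D⟫ with hb_def
  set t := (⟪E, F⟫ : ℝ) with ht_def
  set dAF := Real.arccos ⟪A, F⟫ with hdAF_def
  set dBF := Real.arccos ⟪B, F⟫ with hdBF_def
  set dDE := Real.arccos ⟪D, E⟫ with hdDE_def
  set dCE := Real.arccos ⟪C, E⟫ with hdCE_def
  set g := Real.arccos t with hg_def
  have ha0 : 0 ≤ a := Real.arccos_nonneg _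
  have hb0 : 0 ≤ b := Real.arccos_nonneg _
  have hdAF0 : 0 ≤ dAF := Real.arccos_nonneg _
  have hdAF1 : dAF ≤ π := Real.arccos_le_pi _
  have hdBF0 : 0 ≤ dBF := Real.arccos_nonneg _
  have hdBF1 : dBF ≤ π := Real.arccos_le_pi _
  have hdDE0 : 0 ≤ dDE := Real.arccos_nonneg _
  have hdDE1 : dDE ≤ π := Real.arccos_le_pi _
  have hdCE0 : 0 ≤ dCE := Real.arccos_nonneg _
  have hdCE1 : dCE ≤ π := Real.arccos_le_pi _
  have hg0 : 0 < g := Real.arccos_pos.2 htEF1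
  have hgπ : g ≤ π := Real.arccos_le_pi t
  have hcosg : Real.cos g = t := Real.cos_arccos htm1 ht1
  have hcs1 : Real.cos dAF + Real.cos dBF = 2 * Real.cos (a / 2) * t := by
    rw [hdAF_def, hdBF_def, Real.cos_arccos hAFl hAFr, Real.cos_arccos hBFl hBFr]
    exact hsum1
  have hcs2 : Real.cos dDE + Real.cos dCE = 2 * Real.cos (b / 2) * t := by
    rw [hdDE_def, hdCE_def, Real.cos_arccos hDEl hDEr, Real.cos_arccos hCEl hCEr]
    exact hsum2
  set iAC := (⟪A, C⟫ : ℝ) with hiAC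
  set iAD := (⟪A, D⟫ : ℝ) with hiAD
  set iBC := (⟪B, C⟫ : ℝ) with hiBC
  set iBD := (⟪B, D⟫ : ℝ) with hiBD
  clear_value a b t dAF dBF dDE dCE g iAC iAD iBC iBD
  -- from here on, everything is scalar arithmetic
  have hp_le : Real.cos (a / 2) ≤ 1 := Real.cos_le_one _
  have hq_le : Real.cos (b / 2) ≤ 1 := Real.cos_le_one _
  set p := Real.cos (a / 2) with hp_def
  set q := Real.cos (b / 2) with hq_def
  clear_value p q
  have htlow : Real.cos 1 < t :=
    tlow_aux hp_pos hq_pos hp_le hq_le hcos1pos (by linarith) htexp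
  have hg1 : g < 1 := by
    by_contra hcon
    push_neg at hcon
    have := Real.cos_le_cos_of_nonneg_of_le_pi (by norm_num : (0:ℝ) ≤ 1) hgπ hcon
    rw [hcosg] at this
    linarith
  have hcs1' : Real.cos dAF + Real.cos dBF = 2 * Real.cos (a / 2) * t := by
    rw [← hp_def]; exact hcs1
  have hcs2' : Real.cos dDE + Real.cos dCE = 2 * Real.cos (b / 2) * t := by
    rw [← hq_def]; exact hcs2
  have hP1 : a ^ 2 / 2 + 4 * p * (1 - t) ≤ dAF ^ 2 + dBF ^ 2 := by
    have h := pair_bound ha0 hAB hdAF0 hdAF1 hdBF0 hdBF1 ht1 hcs1'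
    rwa [← hp_def] at h
  have hP2 : b ^ 2 / 2 + 4 * q * (1 - t) ≤ dDE ^ 2 + dCE ^ 2 := by
    have h := pair_bound hb0 hb_lt hdDE0 hdDE1 hdCE0 hdCE1 ht1 hcs2'
    rwa [← hq_def] at h
  have hkey : g ^ 2 < 4 * (1 - t) := by
    have hb := Real.cos_bound (x := g) (by rw [abs_of_pos hg0]; linarith)
    rw [abs_of_pos hg0, hcosg] at hb
    have hb' : t ≤ 1 - g ^ 2 / 2 + g ^ 4 * (5 / 96) := by
      have := abs_le.mp hb
      linarith [this.1]
    exact gkey_aux hg0 hg1 hb' 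
  have hfinal : (p + q) * g ^ 2 < 4 * p * (1 - t) + 4 * q * (1 - t) :=
    final_aux hp_pos hq_pos hkey
  calc (p + q) * g ^ 2 < 4 * p * (1 - t) + 4 * q * (1 - t) := hfinal
    _ ≤ (dAF ^ 2 + dBF ^ 2 - a ^ 2 / 2) + (dDE ^ 2 + dCE ^ 2 - b ^ 2 / 2) := by linarith
    _ = dDE ^ 2 + dAF ^ 2 + dBF ^ 2 + dCE ^ 2 - (1 / 2) * (a ^ 2 + b ^ 2) := by ring
end

section
/- Define g : [0,2] → ℝ by g(t) := (2·arcsin(t/2))². If p, q, r, s ∈ [0,2] satisfy p^{2n} + q^{2n} ≥ r^{2n} + s^{2n} for every positive integer n, then g(p) + g(q) ≥ g(r) + g(s). -/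
open Real Set

noncomputable def hfun (u : ℝ) : ℝ := (2 * Real.arcsin (Real.sqrt u / 2)) ^ 2

noncomputable def kfun (u : ℝ) : ℝ :=
  2 * Real.arcsin (Real.sqrt u / 2) / (Real.sqrt u * Real.sqrt (1 - u / 4))

lemma hfun_hasDerivAt {u : ℝ} (hu : u ∈ Ioo (0:ℝ) 4) : HasDerivAt hfun (kfun u) u := by
  obtain ⟨h0, h4⟩ := hu
  have hsu : 0 < Real.sqrt u := Real.sqrt_pos.2 h0
  have hxlt : Real.sqrt u < 2 := by
    rw [show (2:ℝ) = Real.sqrt 4 by rw [show (4:ℝ) = 2^2 by norm_num, Real.sqrt_sq (by norm_num)]]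
    exact Real.sqrt_lt_sqrt h0.le h4
  have hx1 : Real.sqrt u / 2 < 1 := by linarith
  have hxm1 : (-1:ℝ) < Real.sqrt u / 2 := by
    have := Real.sqrt_nonneg u; linarith
  have hsq : (Real.sqrt u / 2) ^ 2 = u / 4 := by
    rw [div_pow, Real.sq_sqrt h0.le]; norm_num
  have hw : 0 < Real.sqrt (1 - u / 4) := Real.sqrt_pos.2 (by linarith)
  have h1 : HasDerivAt (fun t => Real.sqrt t / 2) (1 / (2 * Real.sqrt u) / 2) u :=
    (Real.hasDerivAt_sqrt (ne_of_gt h0)).div_const 2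
  have h2 : HasDerivAt (fun t => Real.arcsin (Real.sqrt t / 2))
      ((1 / Real.sqrt (1 - (Real.sqrt u / 2) ^ 2)) * (1 / (2 * Real.sqrt u) / 2)) u :=
    by have ha := Real.hasDerivAt_arcsin (ne_of_gt hxm1) (ne_of_lt hx1); exact ha.comp u h1
  have h3 : HasDerivAt (fun t => 2 * Real.arcsin (Real.sqrt t / 2))
      (2 * ((1 / Real.sqrt (1 - (Real.sqrt u / 2) ^ 2)) * (1 / (2 * Real.sqrt u) / 2))) u :=
    h2.const_mul 2
  have h5 := h3.pow 2
  have heq : (↑(2:ℕ) * (2 * Real.arcsin (Real.sqrt u / 2)) ^ (2 - 1) *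
      (2 * ((1 / Real.sqrt (1 - (Real.sqrt u / 2) ^ 2)) * (1 / (2 * Real.sqrt u) / 2)))) = kfun u := by
    rw [hsq]
    unfold kfun
    field_simp
    ring
  rw [heq] at h5
  exact h5

lemma arcsin_convex : ConvexOn ℝ (Icc (0:ℝ) 1) Real.arcsin := by
  apply MonotoneOn.convexOn_of_deriv (convex_Icc 0 1) Real.continuous_arcsin.continuousOn
  · rw [interior_Icc]
    intro x hx
    exact (Real.hasDerivAt_arcsin (by linarith [hx.1]) (ne_of_lt hx.2)).differentiableAt.differentiableWithinAt
  · rw [interior_Icc, Real.deriv_arcsin]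
    intro x hx y hy hxy
    have h1 : 0 < Real.sqrt (1 - y ^ 2) := Real.sqrt_pos.2 (by nlinarith [hy.1, hy.2])
    have h2 : Real.sqrt (1 - y ^ 2) ≤ Real.sqrt (1 - x ^ 2) :=
      Real.sqrt_le_sqrt (by nlinarith [hx.1, hy.1])
    exact one_div_le_one_div_of_le h1 h2

/-- `arcsin x * y ≤ arcsin y * x` for `0 ≤ x ≤ y ≤ 1`. -/
lemma arcsin_ratio {x y : ℝ} (hx : 0 ≤ x) (hxy : x ≤ y) (hy1 : y ≤ 1) (hy0 : 0 < y) :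
    Real.arcsin x * y ≤ Real.arcsin y * x := by
  have h : Real.arcsin ((x / y) • y + (1 - x / y) • (0:ℝ)) ≤
      (x / y) • Real.arcsin y + (1 - x / y) • Real.arcsin 0 :=
    arcsin_convex.2 ⟨hy0.le, hy1⟩ ⟨le_refl (0:ℝ), zero_le_one⟩ (by positivity)
      (by rw [sub_nonneg, div_le_one hy0]; exact hxy) (by ring)
  simp only [smul_eq_mul, mul_zero, add_zero, Real.arcsin_zero] at h
  rw [div_mul_cancel₀ _ (ne_of_gt hy0)] at h
  calc Real.arcsin x * y ≤ (x / y * Real.arcsin y) * y := by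
        apply mul_le_mul_of_nonneg_right h hy0.le
    _ = Real.arcsin y * x := by field_simp

lemma kfun_mono : MonotoneOn kfun (Ioo (0:ℝ) 4) := by
  intro u hu v hv huv
  obtain ⟨hu0, hu4⟩ := hu
  obtain ⟨hv0, hv4⟩ := hv
  have hsu : 0 < Real.sqrt u := Real.sqrt_pos.2 hu0
  have hsv : 0 < Real.sqrt v := Real.sqrt_pos.2 hv0
  have hsuv : Real.sqrt u ≤ Real.sqrt v := Real.sqrt_le_sqrt huv
  have hxlt : Real.sqrt v < 2 := by
    rw [show (2:ℝ) = Real.sqrt 4 by rw [show (4:ℝ) = 2^2 by norm_num, Real.sqrt_sq (by norm_num)]]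
    exact Real.sqrt_lt_sqrt hv0.le hv4
  have hwu : 0 < Real.sqrt (1 - u / 4) := Real.sqrt_pos.2 (by linarith)
  have hwv : 0 < Real.sqrt (1 - v / 4) := Real.sqrt_pos.2 (by linarith)
  have hw : Real.sqrt (1 - v / 4) ≤ Real.sqrt (1 - u / 4) :=
    Real.sqrt_le_sqrt (by linarith)
  have hau : 0 ≤ Real.arcsin (Real.sqrt u / 2) := Real.arcsin_nonneg.2 (by positivity)
  have hav : 0 ≤ Real.arcsin (Real.sqrt v / 2) := Real.arcsin_nonneg.2 (by positivity)
  have hratio : Real.arcsin (Real.sqrt u / 2) * (Real.sqrt v / 2) ≤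
      Real.arcsin (Real.sqrt v / 2) * (Real.sqrt u / 2) :=
    arcsin_ratio (by positivity) (by linarith) (by linarith) (by positivity)
  unfold kfun
  rw [div_le_div_iff₀ (by positivity) (by positivity)]
  calc 2 * Real.arcsin (Real.sqrt u / 2) * (Real.sqrt v * Real.sqrt (1 - v / 4))
      ≤ 2 * Real.arcsin (Real.sqrt v / 2) * (Real.sqrt u * Real.sqrt (1 - v / 4)) := by
        have := mul_le_mul_of_nonneg_right hratio hwv.le
        nlinarith [this]
    _ ≤ 2 * Real.arcsin (Real.sqrt v / 2) * (Real.sqrt u * Real.sqrt (1 - u / 4)) := by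
        apply mul_le_mul_of_nonneg_left _ (by positivity)
        exact mul_le_mul_of_nonneg_left hw hsu.le

lemma hfun_convex : ConvexOn ℝ (Icc (0:ℝ) 4) hfun := by
  apply MonotoneOn.convexOn_of_deriv (convex_Icc 0 4)
  · apply Continuous.continuousOn
    unfold hfun
    exact (continuous_const.mul (Real.continuous_arcsin.comp
      (Real.continuous_sqrt.div_const 2))).pow 2
  · rw [interior_Icc]
    exact fun u hu => (hfun_hasDerivAt hu).differentiableAt.differentiableWithinAt
  · rw [interior_Icc]
    intro u hu v hv huv
    rw [(hfun_hasDerivAt hu).deriv, (hfun_hasDerivAt hv).deriv]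
    exact kfun_mono hu hv huv

lemma hfun_mono : MonotoneOn hfun (Icc (0:ℝ) 4) := by
  intro u hu v hv huv
  unfold hfun
  have hsle : Real.sqrt u ≤ Real.sqrt v := Real.sqrt_le_sqrt huv
  have h1 : Real.arcsin (Real.sqrt u / 2) ≤ Real.arcsin (Real.sqrt v / 2) :=
    Real.monotone_arcsin (by linarith)
  have h2 : 0 ≤ Real.arcsin (Real.sqrt u / 2) := Real.arcsin_nonneg.2 (by positivity)
  nlinarith

lemma two_point {f : ℝ → ℝ} (hconv : ConvexOn ℝ (Icc (0:ℝ) 4) f) {B D C E : ℝ}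
    (hB : B ∈ Icc (0:ℝ) 4) (hE : E ∈ Icc (0:ℝ) 4)
    (hBD : B ≤ D) (hDC : D ≤ C) (hCE : C ≤ E) (hsum : B + E = D + C) :
    f D + f C ≤ f B + f E := by
  rcases eq_or_lt_of_le (hBD.trans (hDC.trans hCE)) with heq | hBE
  · have hD : D = B := le_antisymm (by linarith) hBD
    have hC : C = B := le_antisymm (by linarith) (hBD.trans hDC)
    rw [hD, hC, ← heq]
  · set t := (E - D) / (E - B) with ht
    have hEB : 0 < E - B := by linarith
    have ht0 : 0 ≤ t := div_nonneg (by linarith) hEB.le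
    have ht1 : t ≤ 1 := by rw [ht, div_le_one hEB]; linarith
    have hD' : t * B + (1 - t) * E = D := by rw [ht]; field_simp; ring
    have hC' : (1 - t) * B + t * E = C := by
      have htE : t * (E - B) = E - D := by rw [ht]; field_simp
      linear_combination htE + hsum
    have h1 : f (t • B + (1 - t) • E) ≤ t • f B + (1 - t) • f E :=
      hconv.2 hB hE ht0 (by linarith) (by ring)
    have h2 : f ((1 - t) • B + t • E) ≤ (1 - t) • f B + t • f E :=
      hconv.2 hB hE (by linarith) ht0 (by ring)
    simp only [smul_eq_mul] at h1 h2
    rw [hD'] at h1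
    rw [hC'] at h2
    linarith

lemma maxle {p q r s : ℝ} (hp : 0 ≤ p) (hq : 0 ≤ q) (hr : 0 ≤ r) (hs : 0 ≤ s)
    (h : ∀ n : ℕ, 0 < n → r ^ (2 * n) + s ^ (2 * n) ≤ p ^ (2 * n) + q ^ (2 * n)) :
    max r s ≤ max p q := by
  by_contra hc
  push_neg at hc
  set M := max p q with hM
  set c := max r s with hcdef
  have hM0 : 0 ≤ M := le_trans hp (le_max_left _ _)
  have hc0 : 0 < c := lt_of_le_of_lt hM0 hc
  have key : ∀ n : ℕ, 0 < n → c ^ (2 * n) ≤ 2 * M ^ (2 * n) := by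
    intro n hn
    have h1 : c ^ (2 * n) ≤ r ^ (2 * n) + s ^ (2 * n) := by
      rcases max_cases r s with ⟨he, _⟩ | ⟨he, _⟩ <;> rw [hcdef, he] <;>
        [nlinarith [pow_nonneg hs (2 * n)]; nlinarith [pow_nonneg hr (2 * n)]]
    have h2 := h n hn
    have h3 : p ^ (2 * n) ≤ M ^ (2 * n) := pow_le_pow_left₀ hp (le_max_left _ _) _
    have h4 : q ^ (2 * n) ≤ M ^ (2 * n) := pow_le_pow_left₀ hq (le_max_right _ _) _
    linarith
  have hMpos : 0 < M := by
    rcases hM0.lt_or_eq with h' | h'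
    · exact h'
    · exfalso
      have := key 1 one_pos
      rw [← h'] at this
      simp at this
      nlinarith
  have hx : 1 < c / M := (one_lt_div hMpos).2 hc
  obtain ⟨n, hn⟩ := pow_unbounded_of_one_lt (2 : ℝ) hx
  have hnpos : 0 < n := by
    rcases Nat.eq_zero_or_pos n with h0 | h0
    · rw [h0] at hn; norm_num at hn
    · exact h0
  have h5 : (c / M) ^ n ≤ (c / M) ^ (2 * n) := pow_le_pow_right₀ hx.le (by omega)
  have h6 : (c / M) ^ (2 * n) ≤ 2 := by
    rw [div_pow, div_le_iff₀ (by positivity)]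
    have := key n hnpos
    linarith
  linarith

lemma max_min_sq {x y : ℝ} (hx : 0 ≤ x) (hy : 0 ≤ y) :
    max (x ^ 2) (y ^ 2) = (max x y) ^ 2 := by
  rcases le_total x y with h | h
  · rw [max_eq_right h, max_eq_right (by nlinarith)]
  · rw [max_eq_left h, max_eq_left (by nlinarith)]

lemma main_u {a b c d : ℝ} (ha : a ∈ Icc (0:ℝ) 4) (hb : b ∈ Icc (0:ℝ) 4)
    (hc : c ∈ Icc (0:ℝ) 4) (hd : d ∈ Icc (0:ℝ) 4)
    (hmax : max c d ≤ max a b) (hsum : c + d ≤ a + b) :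
    hfun c + hfun d ≤ hfun a + hfun b := by
  have key : ∀ x y : ℝ, hfun x + hfun y = hfun (max x y) + hfun (min x y) := by
    intro x y
    rcases le_total x y with h | h
    · rw [max_eq_right h, min_eq_left h]; ring
    · rw [max_eq_left h, min_eq_right h]
  rw [key c d, key a b]
  set A := max a b; set B := min a b; set C := max c d; set D := min c d
  have hA : A ∈ Icc (0:ℝ) 4 := ⟨le_trans ha.1 (le_max_left _ _), max_le ha.2 hb.2⟩
  have hB : B ∈ Icc (0:ℝ) 4 := ⟨le_min ha.1 hb.1, le_trans (min_le_left _ _) ha.2⟩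
  have hC : C ∈ Icc (0:ℝ) 4 := ⟨le_trans hc.1 (le_max_left _ _), max_le hc.2 hd.2⟩
  have hD : D ∈ Icc (0:ℝ) 4 := ⟨le_min hc.1 hd.1, le_trans (min_le_left _ _) hc.2⟩
  have hsum' : C + D ≤ A + B := by
    rw [max_add_min, max_add_min]; exact hsum
  have hDC : D ≤ C := min_le_max
  rcases le_total D B with hDB | hBD
  · have h1 : hfun C ≤ hfun A := hfun_mono hC hA hmax
    have h2 : hfun D ≤ hfun B := hfun_mono hD hB hDB
    linarith
  · have hCE : C ≤ C + D - B := by linarith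
    have hEA : C + D - B ≤ A := by linarith
    have hEmem : C + D - B ∈ Icc (0:ℝ) 4 := ⟨le_trans hC.1 hCE, le_trans hEA hA.2⟩
    have h1 : hfun D + hfun C ≤ hfun B + hfun (C + D - B) :=
      two_point hfun_convex hB hEmem hBD hDC hCE (by ring)
    have h2 : hfun (C + D - B) ≤ hfun A := hfun_mono hEmem hA hEA
    linarith

/-- If `p, q, r, s ∈ [0,2]` satisfy `p^{2n} + q^{2n} ≥ r^{2n} + s^{2n}` for every
`n ≥ 1`, then `g(p) + g(q) ≥ g(r) + g(s)` for `g(t) = (2·arcsin(t/2))²`. -/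
theorem arcsin_sq_comparison (p q r s : ℝ)
    (hp : p ∈ Set.Icc (0 : ℝ) 2) (hq : q ∈ Set.Icc (0 : ℝ) 2)
    (hr : r ∈ Set.Icc (0 : ℝ) 2) (hs : s ∈ Set.Icc (0 : ℝ) 2)
    (h : ∀ n : ℕ, 0 < n → r ^ (2 * n) + s ^ (2 * n) ≤ p ^ (2 * n) + q ^ (2 * n)) :
    (2 * Real.arcsin (r / 2)) ^ 2 + (2 * Real.arcsin (s / 2)) ^ 2 ≤
      (2 * Real.arcsin (p / 2)) ^ 2 + (2 * Real.arcsin (q / 2)) ^ 2 := by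
  have hg : ∀ t : ℝ, 0 ≤ t → hfun (t ^ 2) = (2 * Real.arcsin (t / 2)) ^ 2 := by
    intro t ht
    unfold hfun
    rw [Real.sqrt_sq ht]
  rw [← hg p hp.1, ← hg q hq.1, ← hg r hr.1, ← hg s hs.1]
  have hmem : ∀ t : ℝ, t ∈ Set.Icc (0:ℝ) 2 → t ^ 2 ∈ Icc (0:ℝ) 4 := by
    intro t ht
    exact ⟨by positivity, by nlinarith [ht.1, ht.2]⟩
  have hmaxrs : max r s ≤ max p q := maxle hp.1 hq.1 hr.1 hs.1 h
  have hmax : max (r ^ 2) (s ^ 2) ≤ max (p ^ 2) (q ^ 2) := by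
    rw [max_min_sq hr.1 hs.1, max_min_sq hp.1 hq.1]
    exact pow_le_pow_left₀ (le_trans hr.1 (le_max_left _ _)) hmaxrs 2
  have hsum : r ^ 2 + s ^ 2 ≤ p ^ 2 + q ^ 2 := by
    have := h 1 one_pos
    norm_num at this
    exact this
  exact main_u (hmem p hp) (hmem q hq) (hmem r hr) (hmem s hs) hmax hsum
end

section
/- Let H be a real inner product space, let ℓ > 0, and let σ : [0,ℓ] → H be continuously differentiable. Define the affine interpolation λ : [0,ℓ] → H with the same endpoints by λ(t) := σ(0) + (t/ℓ)·(σ(ℓ) − σ(0)). Then ∫₀^ℓ ‖σ(t) − λ(t)‖² dt + ∫₀^ℓ ‖σ′(t) − λ′(t)‖² dt ≤ (1 + ℓ²)·( ∫₀^ℓ ‖σ′(t)‖² dt − ∫₀^ℓ ‖λ′(t)‖² dt ). -/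
open intervalIntegral MeasureTheory Set

open RealInnerProductSpace in
/-- Scalar FTC for the inner product with a fixed vector. -/
lemma ftc_inner_aux {H : Type*} [NormedAddCommGroup H] [InnerProductSpace ℝ H]
    {a b : ℝ} (hab : a ≤ b) {f f' : ℝ → H}
    (hcont : ContinuousOn f (Icc a b))
    (hderiv : ∀ s ∈ Ioo a b, HasDerivAt f (f' s) s)
    (hint : ContinuousOn f' (Icc a b)) (v : H) :
    ∫ s in a..b, ⟪f' s, v⟫ = ⟪f b - f a, v⟫ := by
  have h1 : ∫ s in a..b, ⟪f' s, v⟫ = ⟪f b, v⟫ - ⟪f a, v⟫ := by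
    apply intervalIntegral.integral_eq_sub_of_hasDerivAt_of_le hab
    · exact (continuous_inner.comp_continuousOn (hcont.prodMk continuousOn_const))
    · intro s hs
      simpa using (hderiv s hs).inner ℝ (hasDerivAt_const s v)
    · apply ContinuousOn.intervalIntegrable
      rw [uIcc_of_le hab]
      exact continuous_inner.comp_continuousOn (hint.prodMk continuousOn_const)
  rw [h1, inner_sub_left]

open RealInnerProductSpace in
/-- Flat instance of Corollary A.1: for a `C¹` curve `σ : [0,ℓ] → H` into a real
inner product space and the affine interpolation `λ(t) = σ(0) + (t/ℓ)(σ(ℓ) − σ(0))`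
with the same endpoints,
`∫‖σ − λ‖² + ∫‖σ′ − λ′‖² ≤ (1 + ℓ²)(∫‖σ′‖² − ∫‖λ′‖²)`. -/
theorem flat_energy_convexity
    {H : Type*} [NormedAddCommGroup H] [InnerProductSpace ℝ H]
    (ℓ : ℝ) (hℓ : 0 < ℓ) (σ : ℝ → H)
    (hσ : ContDiffOn ℝ 1 σ (Set.Icc 0 ℓ)) :
    (∫ t in (0 : ℝ)..ℓ, ‖σ t - (σ 0 + (t / ℓ) • (σ ℓ - σ 0))‖ ^ 2)
      + (∫ t in (0 : ℝ)..ℓ, ‖derivWithin σ (Set.Icc 0 ℓ) t - ℓ⁻¹ • (σ ℓ - σ 0)‖ ^ 2)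
    ≤ (1 + ℓ ^ 2) *
        ((∫ t in (0 : ℝ)..ℓ, ‖derivWithin σ (Set.Icc 0 ℓ) t‖ ^ 2)
          - ∫ t in (0 : ℝ)..ℓ, ‖ℓ⁻¹ • (σ ℓ - σ 0)‖ ^ 2) := by
  set c : H := ℓ⁻¹ • (σ ℓ - σ 0) with hc
  set D : ℝ → H := fun t => derivWithin σ (Set.Icc 0 ℓ) t with hD
  set g : ℝ → H := fun t => σ t - σ 0 - t • c with hg
  have hℓc : ℓ • c = σ ℓ - σ 0 := smul_inv_smul₀ hℓ.ne' _
  have hσcont : ContinuousOn σ (Icc 0 ℓ) := hσ.continuousOn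
  have hDcont : ContinuousOn D (Icc 0 ℓ) :=
    hσ.continuousOn_derivWithin (uniqueDiffOn_Icc hℓ) le_rfl
  have hσderiv : ∀ s ∈ Ioo 0 ℓ, HasDerivAt σ (D s) s := by
    intro s hs
    have h1 : HasDerivWithinAt σ (D s) (Icc 0 ℓ) s :=
      (hσ.differentiableOn one_ne_zero s (Ioo_subset_Icc_self hs)).hasDerivWithinAt
    exact h1.hasDerivAt (Icc_mem_nhds hs.1 hs.2)
  have hgcont : ContinuousOn g (Icc 0 ℓ) :=
    (hσcont.sub continuousOn_const).sub ((continuousOn_id).smul continuousOn_const)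
  have hgderiv : ∀ s ∈ Ioo 0 ℓ, HasDerivAt g (D s - c) s := by
    intro s hs
    have h2 : HasDerivAt (fun t : ℝ => t • c) c s := by
      simpa using (hasDerivAt_id s).smul_const c
    exact ((hσderiv s hs).sub_const (σ 0)).sub h2
  have hDccont : ContinuousOn (fun s => D s - c) (Icc 0 ℓ) := hDcont.sub continuousOn_const
  -- norm of D - c and its square
  set A : ℝ := ∫ s in (0:ℝ)..ℓ, ‖D s - c‖ with hA
  set B : ℝ := ∫ s in (0:ℝ)..ℓ, ‖D s - c‖ ^ 2 with hB
  have hhcont : ContinuousOn (fun s => ‖D s - c‖) (Icc 0 ℓ) := hDccont.norm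
  have hhint : IntervalIntegrable (fun s => ‖D s - c‖) volume 0 ℓ := by
    apply ContinuousOn.intervalIntegrable; rwa [uIcc_of_le hℓ.le]
  have hh2int : IntervalIntegrable (fun s => ‖D s - c‖ ^ 2) volume 0 ℓ := by
    apply ContinuousOn.intervalIntegrable
    rw [uIcc_of_le hℓ.le]; exact hhcont.pow 2
  have hA0 : 0 ≤ A :=
    intervalIntegral.integral_nonneg hℓ.le (fun s _ => norm_nonneg _)
  have hB0 : 0 ≤ B :=
    intervalIntegral.integral_nonneg hℓ.le (fun s _ => sq_nonneg _)
  -- g 0 = 0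
  have hg0 : g 0 = 0 := by simp [hg]
  -- Cauchy-Schwarz : A^2 ≤ ℓ * B
  have hCS : A ^ 2 ≤ ℓ * B := by
    have hnn : (0:ℝ) ≤ ∫ s in (0:ℝ)..ℓ, (ℓ * ‖D s - c‖ - A) ^ 2 :=
      intervalIntegral.integral_nonneg hℓ.le (fun s _ => sq_nonneg _)
    have hexp : (∫ s in (0:ℝ)..ℓ, (ℓ * ‖D s - c‖ - A) ^ 2)
        = ℓ ^ 2 * B - 2 * ℓ * A * A + A ^ 2 * ℓ := by
      have : ∀ s : ℝ, (ℓ * ‖D s - c‖ - A) ^ 2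
          = ℓ ^ 2 * ‖D s - c‖ ^ 2 - 2 * ℓ * A * ‖D s - c‖ + A ^ 2 := by
        intro s; ring
      simp_rw [this]
      rw [intervalIntegral.integral_add (((hh2int.const_mul _).sub (hhint.const_mul _)))
            intervalIntegrable_const,
          intervalIntegral.integral_sub (hh2int.const_mul _) (hhint.const_mul _),
          intervalIntegral.integral_const_mul, intervalIntegral.integral_const_mul,
          intervalIntegral.integral_const]
      simp [hA, hB]; ring
    rw [hexp] at hnn
    nlinarith [hℓ]
  -- pointwise bound : ‖g t‖ ^ 2 ≤ A ^ 2 for t ∈ [0, ℓ]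
  have key1 : ∀ t ∈ Icc 0 ℓ, ‖g t‖ ^ 2 ≤ A ^ 2 := by
    intro t ht
    have hIcc : Icc 0 t ⊆ Icc 0 ℓ := Icc_subset_Icc le_rfl ht.2
    have hftc : ∫ s in (0:ℝ)..t, ⟪D s - c, g t⟫ = ⟪g t - g 0, g t⟫ :=
      ftc_inner_aux ht.1 (hgcont.mono hIcc)
        (fun s hs => hgderiv s (Ioo_subset_Ioo le_rfl ht.2 hs)) (hDccont.mono hIcc) (g t)
    rw [hg0, sub_zero, real_inner_self_eq_norm_sq] at hftc
    have hbound : (∫ s in (0:ℝ)..t, ⟪D s - c, g t⟫)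
        ≤ (∫ s in (0:ℝ)..t, ‖D s - c‖) * ‖g t‖ := by
      rw [← intervalIntegral.integral_mul_const]
      apply intervalIntegral.integral_mono_on ht.1
      · apply ContinuousOn.intervalIntegrable
        rw [uIcc_of_le ht.1]
        exact continuous_inner.comp_continuousOn
          ((hDccont.mono hIcc).prodMk continuousOn_const)
      · apply ContinuousOn.intervalIntegrable
        rw [uIcc_of_le ht.1]
        exact ((hhcont.mono hIcc).mul continuousOn_const)
      · intro s _
        exact real_inner_le_norm _ _
    have hAmono : (∫ s in (0:ℝ)..t, ‖D s - c‖) ≤ A := by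
      apply intervalIntegral.integral_mono_interval le_rfl ht.1 ht.2 _ hhint
      filter_upwards with s using norm_nonneg _
    have h3 : ‖g t‖ ^ 2 ≤ A * ‖g t‖ := by
      calc ‖g t‖ ^ 2 = ∫ s in (0:ℝ)..t, ⟪D s - c, g t⟫ := hftc.symm
        _ ≤ (∫ s in (0:ℝ)..t, ‖D s - c‖) * ‖g t‖ := hbound
        _ ≤ A * ‖g t‖ := mul_le_mul_of_nonneg_right hAmono (norm_nonneg _)
    nlinarith [norm_nonneg (g t), sq_nonneg (A - ‖g t‖)]
  -- integral bound : ∫ ‖g‖² ≤ ℓ² * B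
  have key2 : (∫ t in (0:ℝ)..ℓ, ‖g t‖ ^ 2) ≤ ℓ ^ 2 * B := by
    have h4 : (∫ t in (0:ℝ)..ℓ, ‖g t‖ ^ 2) ≤ ∫ _t in (0:ℝ)..ℓ, ℓ * B := by
      apply intervalIntegral.integral_mono_on hℓ.le
      · apply ContinuousOn.intervalIntegrable
        rw [uIcc_of_le hℓ.le]; exact hgcont.norm.pow 2
      · exact intervalIntegrable_const
      · intro t ht
        exact le_trans (key1 t ht) hCS
    rw [intervalIntegral.integral_const, smul_eq_mul] at h4
    calc (∫ t in (0:ℝ)..ℓ, ‖g t‖ ^ 2) ≤ ℓ * (ℓ * B) := by simpa using h4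
      _ = ℓ ^ 2 * B := by ring
  -- energy identity : ∫‖D‖² − ∫‖c‖² = B
  have henergy : (∫ t in (0:ℝ)..ℓ, ‖D t‖ ^ 2) - (∫ _t in (0:ℝ)..ℓ, ‖c‖ ^ 2) = B := by
    have hDint : IntervalIntegrable (fun t => ‖D t‖ ^ 2) volume 0 ℓ := by
      apply ContinuousOn.intervalIntegrable
      rw [uIcc_of_le hℓ.le]; exact hDcont.norm.pow 2
    have hinncont : ContinuousOn (fun t => ⟪D t, c⟫) (Icc 0 ℓ) :=
      continuous_inner.comp_continuousOn (hDcont.prodMk continuousOn_const)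
    have hinnint : IntervalIntegrable (fun t => ⟪D t, c⟫) volume 0 ℓ := by
      apply ContinuousOn.intervalIntegrable; rwa [uIcc_of_le hℓ.le]
    have hDftc : ∫ t in (0:ℝ)..ℓ, ⟪D t, c⟫ = ℓ * ‖c‖ ^ 2 := by
      rw [ftc_inner_aux hℓ.le hσcont hσderiv hDcont c, ← hℓc, real_inner_smul_left,
        real_inner_self_eq_norm_sq]
    have hexp2 : ∀ t : ℝ, ‖D t - c‖ ^ 2 = ‖D t‖ ^ 2 - 2 * ⟪D t, c⟫ + ‖c‖ ^ 2 :=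
      fun t => norm_sub_sq_real _ _
    rw [hB]
    simp_rw [hexp2]
    rw [intervalIntegral.integral_add (hDint.sub (hinnint.const_mul 2)) intervalIntegrable_const,
        intervalIntegral.integral_sub hDint (hinnint.const_mul 2),
        intervalIntegral.integral_const_mul, hDftc,
        intervalIntegral.integral_const]
    simp only [smul_eq_mul, sub_zero]; ring
  -- rewrite the first integrand
  have hfirst : (∫ t in (0:ℝ)..ℓ, ‖σ t - (σ 0 + (t / ℓ) • (σ ℓ - σ 0))‖ ^ 2)
      = ∫ t in (0:ℝ)..ℓ, ‖g t‖ ^ 2 := by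
    apply intervalIntegral.integral_congr
    intro t _
    congr 1
    rw [hg]
    simp only [sub_add_eq_sub_sub]
    congr 2
    rw [hc, smul_smul, div_eq_mul_inv]
  rw [hfirst, henergy]
  nlinarith [key2, hB0]
end
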